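/- arXiv:2503.22449 — 11 statements merged into one kernel-verified Lean document; each statement's English description precedes it below -/
import Mathlib

section
/- Let P = {0, 1, …, m−1} × {0, 1, …, n−1} ⊆ ℝ² be the vertex set of an m × n regular grid, and let k ≥ 2 be a natural number. Then there exists a coloring χ of the 2-element subsets of P with k colors such that for every axis-parallel closed rectangle R = [a₁, b₁] × [a₂, b₂] with |R ∩ P| ≥ √(126 · k · ln k) and for every color c ∈ {1, …, k}, there exists a 2-element subset {x, y} ⊆ R ∩ P with χ({x, y}) = c. -/
/-!
Colour a pair of grid points by its displacement and position. On a line, the pair `x₁ < x₂`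
with gap `d` gets the code `C(d, 2) + x₁ mod d`, so any `L` consecutive points realise every
code below `C(⌊L/2⌋ + 1, 2) ≈ L²/8`. A pair in general position merges its horizontal code `u` and
vertical code `v` into `u·2ʲ + (v - 2ʲ)`, where `2ʲ ≤ v < 2ʲ⁺¹`; choosing `j` as large as the
vertical side allows, a `w × h` box realises every colour below about `(w²/8)(h²/8)/4`, which
exceeds `k` once `(wh)² ≥ 300 k`. As `126 ln k ≥ 300` for `k ≥ 16`, this settles large `k`;
for `k < 16` only boxes with both sides shorter than `10` escape the one-dimensional codes, and
these are checked by computation.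
-/

namespace GridPairColoring

open Set

lemma exists_eq_Ico_of_ordConnected {s : Set ℕ} (hs : s.OrdConnected) (hb : BddAbove s) :
    ∃ α w, s = Ico α (α + w) := by
  rcases s.eq_empty_or_nonempty with rfl | hne
  · exact ⟨0, 0, by simp⟩
  refine ⟨sInf s, sSup s + 1 - sInf s, ?_⟩
  rw [show sInf s + (sSup s + 1 - sInf s) = sSup s + 1 by
    have := csInf_le_csSup hne (OrderBot.bddBelow s) hb; omega, Ico_add_one_right_eq_Icc]
  exact (hne.ordConnected_iff_of_bdd (OrderBot.bddBelow s) hb).1 hs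

lemma exists_coloring_pair_eq {α γ : Type*} [Nonempty γ] (r : α → α → Prop) [Std.Asymm r]
    (f : α → α → γ) : ∃ χ : Set α → γ, ∀ u v, r u v → χ {u, v} = f u v := by
  classical
  refine ⟨fun S =>
    if h : ∃ z : α × α, r z.1 z.2 ∧ S = {z.1, z.2} then f h.choose.1 h.choose.2
    else Classical.arbitrary γ, fun u v huv => ?_⟩
  have h : ∃ z : α × α, r z.1 z.2 ∧ ({u, v} : Set α) = {z.1, z.2} := ⟨(u, v), huv, rfl⟩
  obtain ⟨hr, hS⟩ := h.choose_spec
  simp only [dif_pos h]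
  rcases pair_eq_pair_iff.1 hS with ⟨h₁, h₂⟩ | ⟨h₁, h₂⟩
  · rw [← h₁, ← h₂]
  · rw [← h₁, ← h₂] at hr
    exact absurd hr (Std.Asymm.asymm _ _ huv)

def pairCode (x₁ x₂ : ℕ) : ℕ := (x₂ - x₁).choose 2 + x₁ % (x₂ - x₁)

def codeCount (L : ℕ) : ℕ := (L / 2 + 1).choose 2

lemma exists_choose_two_add_eq {D u : ℕ} (hu : u < (D + 1).choose 2) :
    ∃ d ≤ D, ∃ r < d, d.choose 2 + r = u := by
  induction D with
  | zero => simp at hu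
  | succ D ih =>
    have hsucc : (D + 2).choose 2 = (D + 1).choose 2 + (D + 1) := by
      simp [Nat.choose_succ_succ', add_comm]
    rw [hsucc] at hu
    by_cases h : u < (D + 1).choose 2
    · obtain ⟨d, hd, r, hr, rfl⟩ := ih h
      exact ⟨d, by omega, r, hr, rfl⟩
    · exact ⟨D + 1, le_rfl, u - (D + 1).choose 2, by omega, by omega⟩

lemma exists_mem_Ico_mod_eq (α : ℕ) {d r : ℕ} (hr : r < d) :
    ∃ x ∈ Ico α (α + d), x % d = r := by
  have : r ∈ (Finset.Ico α (α + d)).image (· % d) := by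
    rw [Nat.image_Ico_mod]; exact Finset.mem_range.2 hr
  obtain ⟨x, hx, rfl⟩ := Finset.mem_image.1 this
  exact ⟨x, Finset.coe_Ico α (α + d) ▸ Finset.mem_coe.2 hx, rfl⟩

lemma exists_pairCode_eq (α : ℕ) {L u : ℕ} (hu : u < codeCount L) :
    ∃ x₁ x₂, α ≤ x₁ ∧ x₁ < x₂ ∧ x₂ < α + L ∧ pairCode x₁ x₂ = u := by
  obtain ⟨d, hd, r, hr, rfl⟩ := exists_choose_two_add_eq hu
  obtain ⟨x, ⟨hαx, hxd⟩, rfl⟩ := exists_mem_Ico_mod_eq α hr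
  refine ⟨x, x + d, hαx, by omega, by omega, ?_⟩
  rw [pairCode, Nat.add_sub_cancel_left]

lemma codeCount_mono : Monotone codeCount := fun _ _ h =>
  Nat.choose_le_choose 2 (by omega)

lemma sq_le_eight_mul_codeCount_add_one (L : ℕ) : L ^ 2 ≤ 8 * codeCount L + 1 := by
  have h : 2 * codeCount L = L / 2 * (L / 2 + 1) := by
    rw [codeCount, Nat.choose_two_right, Nat.add_sub_cancel, mul_comm (L / 2 + 1)]
    exact Nat.two_mul_div_two_of_even (Nat.even_mul_succ_self _)
  have hL : L = 2 * (L / 2) + L % 2 := (Nat.div_add_mod L 2).symm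
  have h2 : L % 2 ≤ 1 := Nat.le_of_lt_succ (Nat.mod_lt L two_pos)
  nlinarith

def mix (u v : ℕ) : ℕ := u * 2 ^ Nat.log 2 v + (v - 2 ^ Nat.log 2 v)

lemma mix_two_pow_add (u : ℕ) {j r : ℕ} (hr : r < 2 ^ j) :
    mix u (2 ^ j + r) = u * 2 ^ j + r := by
  have hlog : Nat.log 2 (2 ^ j + r) = j :=
    Nat.log_eq_of_pow_le_of_lt_pow (by omega) (by rw [pow_succ]; omega)
  rw [mix, hlog, Nat.add_sub_cancel_left]

lemma exists_mix_eq {U V j c : ℕ} (hj : 2 ^ (j + 1) ≤ V) (hc : c < U * 2 ^ j) :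
    ∃ u < U, ∃ v < V, mix u v = c := by
  have hpos : 0 < 2 ^ j := by positivity
  have hmod : c % 2 ^ j < 2 ^ j := Nat.mod_lt c hpos
  refine ⟨c / 2 ^ j, (Nat.div_lt_iff_lt_mul hpos).2 hc, 2 ^ j + c % 2 ^ j,
    by rw [pow_succ] at hj; omega, ?_⟩
  rw [mix_two_pow_add _ hmod, Nat.div_add_mod']

/-- Meant for `p` lexicographically before `q`. Going up, the horizontal code is the high part of
`mix`; going down, the vertical one is, so every box offers both arrangements. -/
def pairColor (p q : ℕ × ℕ) : ℕ :=
  if p.1 = q.1 then pairCode p.2 q.2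
  else if p.2 = q.2 then pairCode p.1 q.1
  else if p.2 < q.2 then mix (pairCode p.1 q.1) (pairCode p.2 q.2)
  else mix (pairCode q.2 p.2) (pairCode p.1 q.1)

/-- `X` and `Y` count the line codes along the two sides of a box. The bounds `j < Y` and `j < X`
follow from `2 ^ (j + 1) ≤ Y`, resp. `≤ X`, and only serve to make the predicate decidable. -/
def CoversColors (k X Y : ℕ) : Prop :=
  k ≤ X ∨ k ≤ Y ∨ (∃ j < Y, 2 ^ (j + 1) ≤ Y ∧ k ≤ X * 2 ^ j) ∨
    (∃ j < X, 2 ^ (j + 1) ≤ X ∧ k ≤ Y * 2 ^ j)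

instance (k X Y : ℕ) : Decidable (CoversColors k X Y) := by
  unfold CoversColors; infer_instance

lemma CoversColors.symm {k X Y : ℕ} (h : CoversColors k X Y) : CoversColors k Y X := by
  rcases h with h | h | h | h
  exacts [Or.inr (Or.inl h), Or.inl h, Or.inr (Or.inr (Or.inr h)), Or.inr (Or.inr (Or.inl h))]

lemma exists_pairColor_eq {k w h c : ℕ} (α β : ℕ) (hw : 0 < w) (hh : 0 < h)
    (hcov : CoversColors k (codeCount w) (codeCount h)) (hc : c < k) :
    ∃ p ∈ Ico α (α + w) ×ˢ Ico β (β + h), ∃ q ∈ Ico α (α + w) ×ˢ Ico β (β + h),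
      Prod.Lex (· < ·) (· < ·) p q ∧ pairColor p q = c := by
  simp only [mem_prod, mem_Ico, Prod.lex_def]
  rcases hcov with hX | hY | ⟨j, -, hj, hX⟩ | ⟨j, -, hj, hY⟩
  · obtain ⟨x₁, x₂, h₁, h₁₂, h₂, hcode⟩ := exists_pairCode_eq α (hc.trans_le hX)
    refine ⟨(x₁, β), by omega, (x₂, β), by omega, Or.inl h₁₂, ?_⟩
    simp [pairColor, h₁₂.ne, hcode]
  · obtain ⟨y₁, y₂, h₁, h₁₂, h₂, hcode⟩ := exists_pairCode_eq β (hc.trans_le hY)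
    refine ⟨(α, y₁), by omega, (α, y₂), by omega, Or.inr ⟨rfl, h₁₂⟩, ?_⟩
    simp [pairColor, hcode]
  · obtain ⟨u, hu, v, hv, rfl⟩ := exists_mix_eq hj (hc.trans_le hX)
    obtain ⟨x₁, x₂, hx₁, hx₁₂, hx₂, rfl⟩ := exists_pairCode_eq α hu
    obtain ⟨y₁, y₂, hy₁, hy₁₂, hy₂, rfl⟩ := exists_pairCode_eq β hv
    refine ⟨(x₁, y₁), by omega, (x₂, y₂), by omega, Or.inl hx₁₂, ?_⟩
    simp [pairColor, hx₁₂.ne, hy₁₂.ne, hy₁₂]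
  · obtain ⟨u, hu, v, hv, rfl⟩ := exists_mix_eq hj (hc.trans_le hY)
    obtain ⟨y₁, y₂, hy₁, hy₁₂, hy₂, rfl⟩ := exists_pairCode_eq β hu
    obtain ⟨x₁, x₂, hx₁, hx₁₂, hx₂, rfl⟩ := exists_pairCode_eq α hv
    refine ⟨(x₁, y₂), by omega, (x₂, y₁), by omega, Or.inl hx₁₂, ?_⟩
    simp [pairColor, hx₁₂.ne, hy₁₂.ne', hy₁₂.not_gt]

lemma coversColors_of_four_mul_le {k X Y : ℕ} (hY : 2 ≤ Y) (h : 4 * k ≤ X * (Y + 1)) :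
    CoversColors k X Y := by
  set j := Nat.log 2 Y - 1
  have hlog : 1 ≤ Nat.log 2 Y := Nat.le_log_of_pow_le one_lt_two (by simpa using hY)
  have hj : 2 ^ (j + 1) ≤ Y := by
    rw [Nat.sub_add_cancel hlog]; exact Nat.pow_log_le_self 2 (by omega)
  have hY' : Y < 2 ^ (j + 2) := by
    rw [show j + 2 = Nat.log 2 Y + 1 by omega]; exact Nat.lt_pow_succ_log_self one_lt_two Y
  refine Or.inr (Or.inr (Or.inl ⟨j, Nat.lt_two_pow_self.trans_le (by omega), hj, ?_⟩))
  have : X * (Y + 1) ≤ X * 2 ^ (j + 2) := Nat.mul_le_mul_left X hY'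
  rw [pow_add] at this
  nlinarith

lemma coversColors_of_sq_le {k w h : ℕ} (hwh : 300 * k ≤ (w * h) ^ 2) :
    CoversColors k (codeCount w) (codeCount h) := by
  wlog hle : w ≤ h generalizing w h
  · exact (this (by rwa [mul_comm h w]) (by omega)).symm
  have hX := sq_le_eight_mul_codeCount_add_one w
  have hY := sq_le_eight_mul_codeCount_add_one h
  rcases Nat.lt_or_ge w 4 with hw | hw
  · refine Or.inr (Or.inl ?_)
    have : (w * h) ^ 2 ≤ 9 * h ^ 2 := by
      rw [mul_pow]; exact Nat.mul_le_mul_right _ (by nlinarith)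
    omega
  · have hX' : 15 * w ^ 2 ≤ 128 * codeCount w := by nlinarith
    have hY' : 15 * h ^ 2 ≤ 128 * codeCount h := by nlinarith
    have hY2 : 2 ≤ codeCount h := le_trans (by decide) (codeCount_mono (show 4 ≤ h by omega))
    refine coversColors_of_four_mul_le hY2 ?_
    have := Nat.mul_le_mul hX' hY'
    nlinarith

lemma coversColors_of_lt_sq_of_lt_ten : ∀ k < 16, 2 ≤ k → ∀ w < 10, ∀ h < 10,
    42 * k * Nat.log 2 (k ^ 2) < (w * h) ^ 2 → CoversColors k (codeCount w) (codeCount h) := by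
  decide

lemma coversColors_of_lt_sq {k w h : ℕ} (hk : 2 ≤ k)
    (hwh : 42 * k * Nat.log 2 (k ^ 2) < (w * h) ^ 2) :
    CoversColors k (codeCount w) (codeCount h) := by
  rcases Nat.lt_or_ge k 16 with hk16 | hk16
  · have h15 : 15 ≤ codeCount 10 := by decide
    rcases Nat.lt_or_ge w 10 with hw | hw
    · rcases Nat.lt_or_ge h 10 with hh | hh
      · exact coversColors_of_lt_sq_of_lt_ten k hk16 hk w hw h hh hwh
      · exact Or.inr (Or.inl (by have := codeCount_mono hh; omega))
    · exact Or.inl (by have := codeCount_mono hw; omega)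
  · have : 8 ≤ Nat.log 2 (k ^ 2) :=
      Nat.le_log_of_pow_le one_lt_two (by nlinarith)
    exact coversColors_of_sq_le (by nlinarith)

lemma lt_sq_of_sqrt_le {k N : ℕ} (hk : 2 ≤ k)
    (hN : Real.sqrt (126 * k * Real.log k) ≤ N) : 42 * k * Nat.log 2 (k ^ 2) < N ^ 2 := by
  -- `ln k ≥ (L / 2) ln 2` and `ln 2 > 2 / 3` turn `126 k ln k` into more than `42 k L`
  set L := Nat.log 2 (k ^ 2)
  have hL : 1 ≤ L := Nat.le_log_of_pow_le one_lt_two (by nlinarith)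
  have hlog : L * Real.log 2 ≤ 2 * Real.log k := by
    have h : ((2 ^ L : ℕ) : ℝ) ≤ ((k ^ 2 : ℕ) : ℝ) :=
      Nat.cast_le.2 (Nat.pow_log_le_self 2 (by positivity))
    push_cast at h
    have := Real.log_le_log (by positivity) h
    rwa [Real.log_pow, Real.log_pow] at this
  have hsq := (Real.sqrt_le_left (Nat.cast_nonneg N)).1 hN
  have h2 := Real.log_two_gt_d9
  have hk' : (2 : ℝ) ≤ k := by exact_mod_cast hk
  have hL' : (1 : ℝ) ≤ L := by exact_mod_cast hL
  have : (42 * k * L : ℝ) < N ^ 2 := by nlinarith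
  exact_mod_cast this

noncomputable def gridPoint (z : ℕ × ℕ) : EuclideanSpace ℝ (Fin 2) := !₂[(z.1 : ℝ), z.2]

lemma gridPoint_injective : Function.Injective gridPoint := by
  intro z z' h
  have h₀ := congrArg (· 0) h
  have h₁ := congrArg (· 1) h
  simp only [gridPoint, Matrix.cons_val_zero, Matrix.cons_val_one, Matrix.cons_val_fin_one,
    Nat.cast_inj] at h₀ h₁
  exact Prod.ext h₀ h₁

lemma exists_Ico_eq_setOf (m : ℕ) (a b : ℝ) :
    ∃ α w, {x : ℕ | x < m ∧ a ≤ x ∧ x ≤ b} = Ico α (α + w) :=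
  exists_eq_Ico_of_ordConnected
    ⟨fun _ hx _ hy _ hz => ⟨hz.2.trans_lt hy.1, hx.2.1.trans (by exact_mod_cast hz.1),
      (Nat.cast_le.2 hz.2).trans hy.2.2⟩⟩
    ⟨m, fun _ hx => hx.1.le⟩

lemma grid_inter_box_eq_image (m n : ℕ) (a b : EuclideanSpace ℝ (Fin 2)) :
    {p : EuclideanSpace ℝ (Fin 2) |
        (∃ x : ℕ, x < m ∧ p 0 = x) ∧ (∃ y : ℕ, y < n ∧ p 1 = y)} ∩
        {p | ∀ i, a i ≤ p i ∧ p i ≤ b i} =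
      gridPoint '' ({x : ℕ | x < m ∧ a 0 ≤ x ∧ x ≤ b 0} ×ˢ
        {y : ℕ | y < n ∧ a 1 ≤ y ∧ y ≤ b 1}) := by
  ext p
  constructor
  · rintro ⟨⟨⟨x, hx, hpx⟩, ⟨y, hy, hpy⟩⟩, hab⟩
    refine ⟨(x, y), ⟨⟨hx, hpx ▸ hab 0⟩, ⟨hy, hpy ▸ hab 1⟩⟩, ?_⟩
    ext i
    fin_cases i <;> simp [gridPoint, hpx, hpy]
  · rintro ⟨⟨x, y⟩, ⟨⟨hx, hx'⟩, ⟨hy, hy'⟩⟩, rfl⟩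
    refine ⟨⟨⟨x, hx, by simp [gridPoint]⟩, ⟨y, hy, by simp [gridPoint]⟩⟩, fun i => ?_⟩
    fin_cases i <;> simpa [gridPoint]

end GridPairColoring

open GridPairColoring Set in
/-- For the vertex set `P = {0,…,m-1} × {0,…,n-1}` of an `m × n`
regular grid in `ℝ²` and any `k ≥ 2` there is a `k`-coloring of the 2-element
subsets of `P` such that every axis-parallel closed rectangle containing at
least `√(126·k·ln k)` grid points contains, for each color, a 2-element subset
of that color. -/
theorem grid_rectangle_pair_coloring
    (m n : ℕ) (P : Set (EuclideanSpace ℝ (Fin 2)))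
    (hP : P = {p : EuclideanSpace ℝ (Fin 2) |
      (∃ a : ℕ, a < m ∧ p 0 = a) ∧ (∃ b : ℕ, b < n ∧ p 1 = b)})
    (k : ℕ) (hk : 2 ≤ k) :
    ∃ χ : Set (EuclideanSpace ℝ (Fin 2)) → Fin k,
      ∀ a b : EuclideanSpace ℝ (Fin 2),
        Real.sqrt (126 * k * Real.log k) ≤
          ((P ∩ {p : EuclideanSpace ℝ (Fin 2) | ∀ i, a i ≤ p i ∧ p i ≤ b i}).ncard : ℝ) →
        ∀ col : Fin k, ∃ S : Set (EuclideanSpace ℝ (Fin 2)),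
          S ⊆ P ∩ {p : EuclideanSpace ℝ (Fin 2) | ∀ i, a i ≤ p i ∧ p i ≤ b i} ∧
          S.ncard = 2 ∧ χ S = col := by
  have : NeZero k := ⟨by omega⟩
  obtain ⟨χ, hχ⟩ := exists_coloring_pair_eq (Prod.Lex (· < ·) (· < ·))
    fun p q => Fin.ofNat k (pairColor p q)
  refine ⟨fun S => χ (gridPoint ⁻¹' S), fun a b hN col => ?_⟩
  obtain ⟨α, w, hα⟩ := exists_Ico_eq_setOf m (a 0) (b 0)
  obtain ⟨β, h, hβ⟩ := exists_Ico_eq_setOf n (a 1) (b 1)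
  have hbox : P ∩ {p | ∀ i, a i ≤ p i ∧ p i ≤ b i} =
      gridPoint '' (Ico α (α + w) ×ˢ Ico β (β + h)) := by
    rw [hP, grid_inter_box_eq_image, hα, hβ]
  rw [hbox, ncard_image_of_injective _ gridPoint_injective, ncard_prod] at hN
  have hwh := lt_sq_of_sqrt_le (N := w * h) hk (by simpa using hN)
  have hw : 0 < w := Nat.pos_of_ne_zero fun h0 => by simp [h0] at hwh
  have hh : 0 < h := Nat.pos_of_ne_zero fun h0 => by simp [h0] at hwh
  obtain ⟨p, hp, q, hq, hpq, hc⟩ :=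
    exists_pairColor_eq α β hw hh (coversColors_of_lt_sq hk hwh) col.isLt
  refine ⟨{gridPoint p, gridPoint q}, ?_,
    ncard_pair (gridPoint_injective.ne (ne_of_irrefl hpq)), ?_⟩
  · rw [hbox]
    exact pair_subset (mem_image_of_mem _ hp) (mem_image_of_mem _ hq)
  · show χ (gridPoint ⁻¹' {gridPoint p, gridPoint q}) = col
    rw [← image_pair, preimage_image_eq _ gridPoint_injective, hχ p q hpq, hc,
      Fin.ofNat_val_eq_self]
end

section
/- Fix integers d ≥ 2 and t ≥ 1. There exists a constant C > 0, depending only on d and t, such that for every natural number k ≥ 2 and every grid P = {0, 1, …, m−1}^d ⊆ ℝ^d, there exists a coloring χ of the t-element subsets of P with k colors such that for every axis-parallel closed box B = ∏_{i=1}^d [a_i, b_i] with |B ∩ P| ≥ C · (k · ln k)^{1/t} and for every color c ∈ {1, …, k}, there exists a t-element subset T ⊆ B ∩ P with χ(T) = c. -/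
/-!
Color the `t`-subsets of the discrete torus `(ℤ/q)^d`, with `q ≈ C₀ (k ln k)^(1/t)`, uniformly
at random. A torus box with sides at most `q` and volume at least `q` contains at least
`N = q.choose t` `t`-subsets, so it misses a given color with probability
`(1 - 1/k)^N ≤ exp(-N / k)`; there are at most `(q + 1)^(2d)` such boxes, and for
`C₀ = 128 ((d + 1) t)^2` the union bound leaves a coloring in which all of them are polychromatic.
A `t`-subset of the grid gets the color of its reduction mod `q`. A grid box with at least `q`
points contains a sub-box with sides at most `q` and volume at least `q`, which reduction mod `q`
maps bijectively onto a torus box, so it contains `t`-subsets of every color.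
-/

open Finset Real

section Polychromatic

variable {ι β : Type*} [Fintype β] [DecidableEq β]

lemma card_piFinset_ite_compl_singleton {k : ℕ} (Q : Finset β) (c : Fin k) :
    #(Fintype.piFinset fun x => if x ∈ Q then ({c}ᶜ : Finset (Fin k)) else univ) =
      (k - 1) ^ #Q * k ^ (Fintype.card β - #Q) := by
  simp only [Fintype.card_piFinset, apply_ite card, card_compl, card_singleton, Fintype.card_fin,
    card_univ]
  rw [prod_ite, prod_const, prod_const, filter_mem_eq_inter, univ_inter, filter_not,
    filter_mem_eq_inter, univ_inter, card_sdiff_of_subset (subset_univ Q), card_univ]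

theorem exists_coloring_forall_mem_exists_eq {k M : ℕ} (hk : 0 < k) (s : Finset ι)
    (Q : ι → Finset β) (hQ : ∀ i ∈ s, M ≤ #(Q i)) (h : #s * k * (k - 1) ^ M < k ^ M) :
    ∃ f : β → Fin k, ∀ i ∈ s, ∀ c, ∃ x ∈ Q i, f x = c := by
  rcases s.eq_empty_or_nonempty with rfl | ⟨i₀, hi₀⟩
  · exact ⟨fun _ => ⟨0, hk⟩, by simp⟩
  have hM : M ≤ Fintype.card β := (hQ i₀ hi₀).trans (card_le_univ _)
  choose! Q' hQ'Q hQ' using fun i hi => exists_subset_card_eq (hQ i hi)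
  let bad (i : ι) (c : Fin k) : Finset (β → Fin k) :=
    Fintype.piFinset fun x => if x ∈ Q' i then {c}ᶜ else univ
  have hbad : #(s.biUnion fun i => univ.biUnion (bad i)) < Fintype.card (β → Fin k) := by
    calc #(s.biUnion fun i => univ.biUnion (bad i))
        ≤ ∑ i ∈ s, ∑ c : Fin k, #(bad i c) :=
          card_biUnion_le.trans (sum_le_sum fun _ _ => card_biUnion_le)
      _ = #s * k * (k - 1) ^ M * k ^ (Fintype.card β - M) := by
          rw [sum_congr rfl fun i hi => sum_congr rfl fun c _ => by
            rw [card_piFinset_ite_compl_singleton, hQ' i hi]]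
          simp [mul_assoc]
      _ < k ^ M * k ^ (Fintype.card β - M) :=
          Nat.mul_lt_mul_of_pos_right h (pow_pos hk _)
      _ = Fintype.card (β → Fin k) := by
          rw [← pow_add, Nat.add_sub_cancel' hM]; simp
  obtain ⟨f, -, hf⟩ := exists_mem_notMem_of_card_lt_card hbad
  refine ⟨f, fun i hi c => ?_⟩
  by_contra! hne
  refine hf (mem_biUnion.2 ⟨i, hi, mem_biUnion.2 ⟨c, mem_univ c, ?_⟩⟩)
  refine Fintype.mem_piFinset.2 fun x => ?_
  split_ifs with hx
  · exact mem_compl.2 fun hc => hne x (hQ'Q i hi hx) (mem_singleton.1 hc)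
  · exact mem_univ _

end Polychromatic

theorem mul_pow_sub_one_lt_pow_of_log_lt {A k M : ℕ} (hA : 0 < A) (hk : 0 < k)
    (h : log A < M / k) : A * (k - 1) ^ M < k ^ M := by
  have hkR : (0 : ℝ) < k := by exact_mod_cast hk
  have hbase : ((k - 1 : ℕ) : ℝ) ≤ k * exp (-(1 / k)) := by
    have := add_one_le_exp (-(1 / k : ℝ))
    rw [Nat.cast_pred hk]
    calc (k : ℝ) - 1 = k * (-(1 / k) + 1) := by field_simp; ring
      _ ≤ k * exp (-(1 / k)) := by gcongr
  have hsmall : A * exp (-(M / k)) < 1 := by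
    rw [← exp_log (by exact_mod_cast hA : (0 : ℝ) < A), ← exp_add, exp_lt_one_iff]
    linarith
  have : (A : ℝ) * ((k - 1 : ℕ) : ℝ) ^ M < (k : ℝ) ^ M :=
    calc (A : ℝ) * ((k - 1 : ℕ) : ℝ) ^ M ≤ A * (k * exp (-(1 / k))) ^ M := by gcongr
      _ = A * exp (-(M / k)) * (k : ℝ) ^ M := by
          rw [mul_pow, ← exp_nat_mul]; ring_nf
      _ < 1 * (k : ℝ) ^ M := by gcongr
      _ = (k : ℝ) ^ M := one_mul _
  exact_mod_cast this

theorem pow_div_le_choose {n t : ℕ} (h : 2 * t ≤ n) :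
    ((n : ℝ) / (2 * t)) ^ t ≤ n.choose t := by
  rcases Nat.eq_zero_or_pos t with rfl | ht
  · simp
  have hfac : (t.factorial : ℝ) ≤ (t : ℝ) ^ t := by exact_mod_cast Nat.factorial_le_pow t
  have hsub : (n : ℝ) / 2 ≤ ((n + 1 - t : ℕ) : ℝ) := by
    rw [Nat.cast_sub (by omega)]; push_cast
    have : (2 * t : ℝ) ≤ n := by exact_mod_cast h
    linarith
  calc ((n : ℝ) / (2 * t)) ^ t = ((n : ℝ) / 2) ^ t / (t : ℝ) ^ t := by
        rw [← div_div, div_pow]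
    _ ≤ ((n + 1 - t : ℕ) : ℝ) ^ t / t.factorial := by gcongr
    _ ≤ n.choose t := Nat.pow_le_choose t n

theorem mul_pow_le_choose {t q : ℕ} {B x : ℝ} (ht : 1 ≤ t) (hB : 1 ≤ B) (hx : 1 ≤ x)
    (hq : 2 * t * B * x ≤ q) : B * x ^ t ≤ q.choose t := by
  have htR : (0 : ℝ) < 2 * t := by positivity
  have h2t : 2 * t ≤ q := by
    have hBx : 1 ≤ B * x := one_le_mul_of_one_le_of_one_le hB hx
    exact_mod_cast (by nlinarith : (2 * t : ℝ) ≤ q)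
  calc B * x ^ t ≤ B ^ t * x ^ t := by gcongr; exact le_self_pow₀ hB (by omega)
    _ = (B * x) ^ t := (mul_pow B x t).symm
    _ ≤ ((q : ℝ) / (2 * t)) ^ t := by
        gcongr; rw [le_div_iff₀ htR]; linarith
    _ ≤ q.choose t := pow_div_le_choose h2t

theorem one_half_le_log_natCast {k : ℕ} (hk : 2 ≤ k) : 1 / 2 ≤ log k := by
  have := log_two_gt_d9
  linarith [log_le_log two_pos (by exact_mod_cast hk : (2 : ℝ) ≤ k)]

theorem log_le_two_mul_log_of_pow_eq {t k : ℕ} {x : ℝ} (ht : 1 ≤ t) (hk : 0 < k) (hx : 1 ≤ x)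
    (hxt : x ^ t = k * log k) : log x ≤ 2 * log k := by
  have hkL : t * log x ≤ 2 * log k :=
    calc t * log x = log (k * log k) := by rw [← log_pow, hxt]
      _ ≤ log (k * k) := by
          gcongr
          · rw [← hxt]; positivity
          · exact log_le_self (by positivity)
      _ = 2 * log k := by rw [log_mul (by positivity) (by positivity)]; ring
  have htR : (1 : ℝ) ≤ t := by exact_mod_cast ht
  nlinarith [log_nonneg hx]

theorem succ_pow_mul_pow_sub_one_choose_lt {d t k q : ℕ} {x : ℝ} (ht : 1 ≤ t) (hk : 2 ≤ k)
    (hx : 1 ≤ x) (hxt : x ^ t = k * log k) (hlo : 128 * ((d + 1) * t) ^ 2 * x ≤ q)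
    (hhi : q ≤ (128 * ((d + 1) * t) ^ 2 + 1) * x) :
    (q + 1) ^ (2 * d) * k * (k - 1) ^ q.choose t < k ^ q.choose t := by
  set L := log k
  have htR : (1 : ℝ) ≤ t := by exact_mod_cast ht
  set u : ℝ := (d + 1) * t
  have hd : (0 : ℝ) ≤ d := d.cast_nonneg
  have hu : 1 ≤ u := one_le_mul_of_one_le_of_one_le (by linarith) htR
  have hL : 1 / 2 ≤ L := one_half_le_log_natCast hk
  have hlogx : log x ≤ 2 * L := log_le_two_mul_log_of_pow_eq ht (by omega) hx hxt
  have hchoose : 64 * (d + 1) * u * (k * L) ≤ q.choose t := by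
    rw [← hxt]
    exact mul_pow_le_choose ht (by nlinarith) hx (by linarith)
  have hlogq : log (q + 1) ≤ 6 + 2 * u + 2 * L := by
    have hq1 : (q : ℝ) + 1 ≤ 2 ^ 8 * u ^ 2 * x := by
      nlinarith [mul_le_mul_of_nonneg_right (one_le_pow₀ hu : 1 ≤ u ^ 2)
        (by linarith : 0 ≤ x)]
    have h2 : 8 * log 2 ≤ 6 := by linarith [log_two_lt_d9]
    calc log (q + 1) ≤ log (2 ^ 8 * u ^ 2 * x) := log_le_log (by positivity) hq1
      _ = 8 * log 2 + 2 * log u + log x := by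
          rw [log_mul (by positivity) (by positivity), log_mul (by positivity) (by positivity),
            log_pow, log_pow]
          push_cast; ring
      _ ≤ 6 + 2 * u + 2 * L := by linarith [log_le_self (by positivity : 0 ≤ u)]
  have hkey : 2 * d * (6 + 2 * u + 2 * L) + L < 64 * (d + 1) * u * L := by
    have hL' : (0 : ℝ) ≤ L - 1 / 2 := by linarith
    nlinarith [mul_nonneg hd hL', mul_nonneg (mul_nonneg hd (by linarith : (0 : ℝ) ≤ u)) hL',
      mul_nonneg hd (by linarith : (0 : ℝ) ≤ u - 1)]
  apply mul_pow_sub_one_lt_pow_of_log_lt (by positivity) (by omega)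
  rw [lt_div_iff₀ (by positivity)]
  push_cast
  rw [log_mul (by positivity) (by positivity), log_pow]
  push_cast
  have hkR : (0 : ℝ) < k := by exact_mod_cast (by omega : 0 < k)
  nlinarith [mul_le_mul_of_nonneg_left hlogq (by positivity : (0 : ℝ) ≤ 2 * d * k),
    mul_lt_mul_of_pos_right hkey hkR]

section TorusBox

variable {d q : ℕ}

def torusBox (a : Fin d → ZMod q) (s : Fin d → ℕ) : Finset (Fin d → ZMod q) :=
  Fintype.piFinset fun i => (range (s i)).image fun j : ℕ => a i + j

theorem card_torusBox (a : Fin d → ZMod q) {s : Fin d → ℕ} (hs : ∀ i, s i ≤ q) :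
    #(torusBox a s) = ∏ i, s i := by
  rw [torusBox, Fintype.card_piFinset]
  refine prod_congr rfl fun i _ => ?_
  rw [card_image_of_injOn, card_range]
  intro j hj j' hj' h
  have hj : j < q := (mem_range.1 hj).trans_le (hs i)
  have hj' : j' < q := (mem_range.1 hj').trans_le (hs i)
  simpa [ZMod.natCast_eq_natCast_iff', Nat.mod_eq_of_lt hj, Nat.mod_eq_of_lt hj'] using h

theorem image_natCast_piFinset_Ico (lo s : Fin d → ℕ) :
    (Fintype.piFinset fun i => Ico (lo i) (lo i + s i)).image (fun v i => (v i : ZMod q)) =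
      torusBox (fun i => lo i) s := by
  rw [torusBox, ← Fintype.piFinset_image]
  refine congrArg _ (funext fun i => ?_)
  have : Ico (lo i) (lo i + s i) = (range (s i)).image (lo i + ·) := by
    rw [range_eq_Ico, image_add_left_Ico, add_zero]
  rw [this, image_image]
  simp [Function.comp_def]

def IsTorusBoxPolychromatic (t : ℕ) {k : ℕ} (f : Finset (Fin d → ZMod q) → Fin k) : Prop :=
  ∀ a s, (∀ i, s i ≤ q) → q ≤ ∏ i, s i →
    ∀ c, ∃ T ∈ (torusBox a s).powersetCard t, f T = c

theorem exists_isTorusBoxPolychromatic [NeZero q] {k t : ℕ} (hk : 0 < k)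
    (h : (q + 1) ^ (2 * d) * k * (k - 1) ^ q.choose t < k ^ q.choose t) :
    ∃ f : Finset (Fin d → ZMod q) → Fin k, IsTorusBoxPolychromatic t f := by
  let boxes := (univ : Finset ((Fin d → ZMod q) × (Fin d → Fin (q + 1)))).filter
    fun p => q ≤ ∏ i, (p.2 i : ℕ)
  have hcard : #boxes ≤ (q + 1) ^ (2 * d) :=
    calc #boxes ≤ q ^ d * (q + 1) ^ d := (card_filter_le _ _).trans_eq (by simp)
      _ ≤ (q + 1) ^ d * (q + 1) ^ d := by gcongr; omega
      _ = (q + 1) ^ (2 * d) := by ring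
  obtain ⟨f, hf⟩ := exists_coloring_forall_mem_exists_eq hk boxes
    (fun p => (torusBox p.1 fun i => p.2 i).powersetCard t)
    (fun p hp => by
      rw [card_powersetCard, card_torusBox _ fun i => Nat.lt_succ_iff.1 (p.2 i).isLt]
      exact Nat.choose_le_choose t (mem_filter.1 hp).2)
    (lt_of_le_of_lt (by gcongr) h)
  exact ⟨f, fun a s hs hq =>
    hf (a, fun i => ⟨s i, Nat.lt_succ_of_le (hs i)⟩) (by simpa [boxes])⟩

end TorusBox

theorem Finset.exists_Ico_subset_of_ordConnected {s : Finset ℕ} (hs : (s : Set ℕ).OrdConnected)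
    {n : ℕ} (hn : n ≤ #s) : ∃ a, Ico a (a + n) ⊆ s := by
  rcases s.eq_empty_or_nonempty with rfl | hne
  · exact ⟨0, by simp_all⟩
  refine ⟨s.min' hne, fun x hx => ?_⟩
  have hsub : s ⊆ Icc (s.min' hne) (s.max' hne) := fun y hy =>
    mem_Icc.2 ⟨min'_le s y hy, le_max' s y hy⟩
  have := (card_le_card hsub).trans_eq (Nat.card_Icc _ _)
  rw [mem_Ico] at hx
  exact mod_cast hs.out (min'_mem s hne) (max'_mem s hne) ⟨hx.1, by omega⟩

theorem le_prod_min_of_le_prod {ι : Type*} [Fintype ι] {c : ι → ℕ} {q : ℕ}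
    (h : q ≤ ∏ i, c i) : q ≤ ∏ i, min (c i) q := by
  rcases Nat.eq_zero_or_pos q with rfl | hq
  · exact Nat.zero_le _
  by_cases hle : ∀ i, c i ≤ q
  · simpa [min_eq_left (hle _)] using h
  push Not at hle
  obtain ⟨j, hj⟩ := hle
  have hc : ∀ i, c i ≠ 0 := fun i hi => by
    have := prod_eq_zero (mem_univ i) hi
    omega
  calc q = min (c j) q := (min_eq_right hj.le).symm
    _ ≤ ∏ i, min (c i) q :=
        single_le_prod' (fun i _ => le_min (Nat.one_le_iff_ne_zero.2 (hc i)) (by omega))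
          (mem_univ j)

section Grid

variable {d : ℕ}

def latticePoint (v : Fin d → ℕ) : EuclideanSpace ℝ (Fin d) :=
  WithLp.toLp 2 fun i => (v i : ℝ)

theorem latticePoint_injective : Function.Injective (latticePoint (d := d)) := fun u v h =>
  funext fun i => by simpa [latticePoint] using congrArg (· i) h

theorem inter_box_eq_image_latticePoint {m : ℕ} {P : Set (EuclideanSpace ℝ (Fin d))}
    (hP : P = {p : EuclideanSpace ℝ (Fin d) | ∀ i, ∃ a : ℕ, a < m ∧ p i = a})
    (a b : EuclideanSpace ℝ (Fin d)) :
    P ∩ {p : EuclideanSpace ℝ (Fin d) | ∀ i, a i ≤ p i ∧ p i ≤ b i} =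
      latticePoint '' ↑(Fintype.piFinset fun i =>
        (range m).filter fun n : ℕ => a i ≤ n ∧ (n : ℝ) ≤ b i) := by
  ext p
  simp only [hP, Set.mem_inter_iff, Set.mem_ofPred_eq, Set.mem_image, Fintype.coe_piFinset,
    Set.mem_pi, Set.mem_univ, mem_coe, mem_filter, mem_range, true_implies]
  constructor
  · rintro ⟨hp, hab⟩
    choose v hvm hv using hp
    exact ⟨v, fun i => ⟨hvm i, hv i ▸ hab i⟩, PiLp.ext fun i => (hv i).symm⟩
  · rintro ⟨v, hv, rfl⟩
    exact ⟨fun i => ⟨v i, (hv i).1, rfl⟩, fun i => (hv i).2⟩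

theorem ordConnected_range_filter (m : ℕ) (a b : ℝ) :
    (↑((range m).filter fun n : ℕ => a ≤ n ∧ (n : ℝ) ≤ b) : Set ℕ).OrdConnected := by
  refine ⟨fun x hx z hz y hy => ?_⟩
  simp only [coe_filter, mem_range, Set.mem_ofPred_eq] at hx hz ⊢
  have hxy : (x : ℝ) ≤ y := mod_cast hy.1
  have hyz : (y : ℝ) ≤ z := mod_cast hy.2
  exact ⟨hy.2.trans_lt hz.1, by linarith, by linarith⟩

variable {q : ℕ}

noncomputable def reduceMod (q : ℕ) (p : EuclideanSpace ℝ (Fin d)) : Fin d → ZMod q :=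
  fun i => ⌊p i⌋

theorem reduceMod_latticePoint (v : Fin d → ℕ) :
    reduceMod q (latticePoint v) = fun i => (v i : ZMod q) := by
  ext i; simp [reduceMod, latticePoint]

noncomputable def liftColoring [NeZero q] {k : ℕ} (f : Finset (Fin d → ZMod q) → Fin k)
    (S : Set (EuclideanSpace ℝ (Fin d))) : Fin k :=
  f (reduceMod q '' S).toFinite.toFinset

theorem IsTorusBoxPolychromatic.exists_subset_ncard_eq [NeZero q] {t k : ℕ}
    {f : Finset (Fin d → ZMod q) → Fin k} (hf : IsTorusBoxPolychromatic t f) {m : ℕ}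
    {P : Set (EuclideanSpace ℝ (Fin d))}
    (hP : P = {p : EuclideanSpace ℝ (Fin d) | ∀ i, ∃ a : ℕ, a < m ∧ p i = a})
    {a b : EuclideanSpace ℝ (Fin d)}
    (hbox :
      q ≤ (P ∩ {p : EuclideanSpace ℝ (Fin d) | ∀ i, a i ≤ p i ∧ p i ≤ b i}).ncard)
    (c : Fin k) :
    ∃ T, T ⊆ P ∩ {p : EuclideanSpace ℝ (Fin d) | ∀ i, a i ≤ p i ∧ p i ≤ b i} ∧
      T.ncard = t ∧ liftColoring f T = c := by
  set I := fun i => (range m).filter fun n : ℕ => a i ≤ n ∧ (n : ℝ) ≤ b i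
  rw [inter_box_eq_image_latticePoint hP] at hbox ⊢
  rw [Set.ncard_image_of_injective _ latticePoint_injective, Set.ncard_coe_finset,
    Fintype.card_piFinset] at hbox
  choose lo hlo using fun i =>
    (I i).exists_Ico_subset_of_ordConnected (ordConnected_range_filter m (a i) (b i))
      (min_le_left #(I i) q)
  set s := fun i => min #(I i) q
  obtain ⟨T, hT, hTc⟩ := hf (fun i => lo i) s (fun i => min_le_right _ _)
    (le_prod_min_of_le_prod hbox) c
  rw [mem_powersetCard, ← image_natCast_piFinset_Ico] at hT
  obtain ⟨U, hU, rfl⟩ := subset_image_iff.1 hT.1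
  have hinj : Set.InjOn (fun (v : Fin d → ℕ) i => (v i : ZMod q))
      (Fintype.piFinset fun i => Ico (lo i) (lo i + s i) : Set (Fin d → ℕ)) := by
    rw [← card_image_iff, image_natCast_piFinset_Ico, card_torusBox _ fun i => min_le_right _ _,
      Fintype.card_piFinset]
    simp only [Nat.card_Ico, Nat.add_sub_cancel_left, s]
  refine ⟨latticePoint '' U,
    Set.image_mono fun v hv => Fintype.piFinset_subset _ _ hlo (hU hv), ?_, ?_⟩
  · rw [Set.ncard_image_of_injective _ latticePoint_injective, Set.ncard_coe_finset,
      ← hT.2, card_image_of_injOn (hinj.mono (coe_subset.2 hU))]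
  · rw [← hTc, liftColoring]
    congr 1
    ext u
    simp [reduceMod_latticePoint]

end Grid

theorem grid_box_tuple_coloring_general
    (d t : ℕ) (ht : 1 ≤ t) :
    ∃ C : ℝ, 0 < C ∧
      ∀ (k : ℕ), 2 ≤ k →
        ∀ (m : ℕ) (P : Set (EuclideanSpace ℝ (Fin d))),
          P = {p : EuclideanSpace ℝ (Fin d) | ∀ i, ∃ a : ℕ, a < m ∧ p i = a} →
          ∃ χ : Set (EuclideanSpace ℝ (Fin d)) → Fin k,
            ∀ a b : EuclideanSpace ℝ (Fin d),
              C * ((k : ℝ) * Real.log k) ^ ((1 : ℝ) / t) ≤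
                ((P ∩ {p : EuclideanSpace ℝ (Fin d) | ∀ i, a i ≤ p i ∧ p i ≤ b i}).ncard : ℝ) →
              ∀ col : Fin k, ∃ T : Set (EuclideanSpace ℝ (Fin d)),
                T ⊆ P ∩ {p : EuclideanSpace ℝ (Fin d) | ∀ i, a i ≤ p i ∧ p i ≤ b i} ∧
                T.ncard = t ∧ χ T = col := by
  refine ⟨128 * ((d + 1) * t) ^ 2 + 1, by positivity, fun k hk m P hP => ?_⟩
  have hkL : 1 ≤ (k : ℝ) * log k :=
    calc (1 : ℝ) = 2 * (1 / 2) := by norm_num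
      _ ≤ k * log k := mul_le_mul (by exact_mod_cast hk) (one_half_le_log_natCast hk)
          (by norm_num) (by positivity)
  set x := ((k : ℝ) * log k) ^ ((1 : ℝ) / t)
  have hx : 1 ≤ x := one_le_rpow hkL (by positivity)
  have hxt : x ^ t = k * log k := by
    simp only [x, one_div]; exact rpow_inv_natCast_pow (by positivity) (by omega)
  set q := ⌈128 * ((d + 1) * t) ^ 2 * x⌉₊
  have hq : (q : ℝ) ≤ (128 * ((d + 1) * t) ^ 2 + 1) * x := by
    linarith [Nat.ceil_lt_add_one (by positivity : (0 : ℝ) ≤ 128 * ((d + 1) * t) ^ 2 * x)]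
  have : NeZero q := ⟨Nat.ceil_pos.2 (by positivity) |>.ne'⟩
  obtain ⟨f, hf⟩ := exists_isTorusBoxPolychromatic (d := d) (t := t) (by omega : 0 < k)
    (succ_pow_mul_pow_sub_one_choose_lt ht hk hx hxt (Nat.le_ceil _) hq)
  refine ⟨liftColoring f, fun a b hbox col => hf.exists_subset_ncard_eq hP ?_ col⟩
  exact Nat.cast_le.1 (hq.trans hbox)

/-- For fixed `d ≥ 2` and `t ≥ 1` there is a constant `C > 0`
such that for every `k ≥ 2` and every grid `P = {0,…,m-1}^d ⊆ ℝ^d` there is a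
`k`-coloring of the `t`-element subsets of `P` such that every axis-parallel
closed box containing at least `C·(k·ln k)^(1/t)` grid points contains, for
each color, a `t`-element subset of that color. -/
theorem grid_box_tuple_coloring
    (d t : ℕ) (hd : 2 ≤ d) (ht : 1 ≤ t) :
    ∃ C : ℝ, 0 < C ∧
      ∀ (k : ℕ), 2 ≤ k →
        ∀ (m : ℕ) (P : Set (EuclideanSpace ℝ (Fin d))),
          P = {p : EuclideanSpace ℝ (Fin d) | ∀ i, ∃ a : ℕ, a < m ∧ p i = a} →
          ∃ χ : Set (EuclideanSpace ℝ (Fin d)) → Fin k,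
            ∀ a b : EuclideanSpace ℝ (Fin d),
              C * ((k : ℝ) * Real.log k) ^ ((1 : ℝ) / t) ≤
                ((P ∩ {p : EuclideanSpace ℝ (Fin d) | ∀ i, a i ≤ p i ∧ p i ≤ b i}).ncard : ℝ) →
              ∀ col : Fin k, ∃ T : Set (EuclideanSpace ℝ (Fin d)),
                T ⊆ P ∩ {p : EuclideanSpace ℝ (Fin d) | ∀ i, a i ≤ p i ∧ p i ≤ b i} ∧
                T.ncard = t ∧ χ T = col :=
  grid_box_tuple_coloring_general d t ht
end

section
/- Let d ≥ 2 be an integer, let H = (V, E) be a shrinkable hypergraph with VC-dimension at most d and with n = |V| ≥ 2d + 2 vertices, let k ≥ 2 be a natural number, and let c be any real number with c ≥ 4(d+1)^{d+1}. Then there exists a coloring χ of the (d+1)-element subsets of V with k colors such that for every hyperedge e ∈ E with |e| ≥ c^{k−1} and for every color i ∈ {1, …, k}, there exists a (d+1)-element subset T ⊆ e with χ(T) = i. -/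
open Finset

lemma claimB {α : Type*} [DecidableEq α] (V : Finset α) (E : Set (Finset α))
    (d : ℕ)
    (hVC : ∀ S : Finset α, S ⊆ V →
      (∀ B : Finset α, B ⊆ S → ∃ e ∈ E, e ∩ S = B) → S.card ≤ d)
    (t : ℕ) (hdt : d + 1 ≤ t)
    (f : Finset α) (hfV : f ⊆ V)
    (hcard : (d+1) * ((d+1) * 2^(d+1) * (t - (d+1)) + 2) ≤ f.card) :
    ∃ T ⊆ f, T.card = d + 1 ∧ ∀ g ∈ E, T ⊆ g → t < g.card := by
  classical
  by_contra hcon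
  push_neg at hcon
  -- hcon : ∀ T ⊆ f, T.card = d+1 → ∃ g ∈ E, T ⊆ g ∧ g.card ≤ t
  set N : ℕ := (d+1) * 2^(d+1) * (t - (d+1)) + 2 with hN
  have hN2 : 2 ≤ N := by omega
  obtain ⟨u, huf, hucard⟩ := Finset.exists_subset_card_eq hcard
  have hcast : (d+1) * N = u.card := hucard.symm
  set θ : Fin (d+1) × Fin N → α :=
    fun q => ((u.equivFin.symm (Fin.cast hcast (finProdFinEquiv q))) : α) with hθ
  have hθinj : Function.Injective θ := by
    intro a b hab
    have : u.equivFin.symm (Fin.cast hcast (finProdFinEquiv a)) =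
        u.equivFin.symm (Fin.cast hcast (finProdFinEquiv b)) := Subtype.coe_injective hab
    have := u.equivFin.symm.injective this
    have := Fin.cast_injective hcast this
    exact finProdFinEquiv.injective this
  have hθf : ∀ q, θ q ∈ f := fun q => huf (Finset.coe_mem _)
  set p : Fin (d+1) → α := fun j => θ (j, ⟨0, by omega⟩) with hp
  set F : Fin (d+1) → Finset α := fun j => (univ : Finset (Fin N)).image (fun i => θ (j, i)) with hF
  have hpF : ∀ j, p j ∈ F j := fun j => mem_image_of_mem _ (mem_univ _)
  have hFf : ∀ j, F j ⊆ f := by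
    intro j x hx
    obtain ⟨i, _, rfl⟩ := mem_image.1 hx
    exact hθf _
  have hFcard : ∀ j, (F j).card = N := by
    intro j
    rw [Finset.card_image_of_injective _ (fun a b hab => by
      have := hθinj hab
      exact (Prod.mk.injEq ..).mp this |>.2)]
    simp
  have hblock : ∀ {j j' : Fin (d+1)} {x : α}, x ∈ F j → x ∈ F j' → j = j' := by
    intro j j' x hx hx'
    obtain ⟨i, _, rfl⟩ := mem_image.1 hx
    obtain ⟨i', _, h⟩ := mem_image.1 hx'
    have := hθinj h
    exact ((Prod.mk.injEq ..).mp this).1.symm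
  set C : Fin (d+1) → Finset α := fun j => (F j).erase (p j) with hC
  have hCcard : ∀ j, (C j).card = N - 1 := by
    intro j; rw [hC]; rw [card_erase_of_mem (hpF j), hFcard]
  -- selection of a small covering edge for every (d+1)-subset of f
  have hsel : ∀ Ws : Finset α, Ws ⊆ f → Ws.card = d+1 →
      ∃ g, g ∈ E ∧ Ws ⊆ g ∧ g.card ≤ t := by
    intro Ws h1 h2
    obtain ⟨g, hg, h3, h4⟩ := hcon Ws h1 h2
    exact ⟨g, hg, h3, h4⟩
  set gsel : Finset α → Finset α :=
    fun Ws => if h : Ws ⊆ f ∧ Ws.card = d+1 then (hsel Ws h.1 h.2).choose else ∅ with hgseldef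
  have hgsel : ∀ Ws : Finset α, Ws ⊆ f → Ws.card = d+1 →
      gsel Ws ∈ E ∧ Ws ⊆ gsel Ws ∧ (gsel Ws).card ≤ t := by
    intro Ws h1 h2
    rw [hgseldef]
    simp only [dif_pos (And.intro h1 h2)]
    exact (hsel Ws h1 h2).choose_spec
  -- the W sets
  set W : Finset (Fin (d+1)) → (Fin (d+1) → α) → Finset α :=
    fun A v => A.image v ∪ Aᶜ.image p with hW
  set Pi : Finset (Fin (d+1) → α) := Fintype.piFinset C with hPidef
  have hmemPi : ∀ v ∈ Pi, ∀ j, v j ∈ F j ∧ v j ≠ p j := by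
    intro v hv j
    have := (Fintype.mem_piFinset.1 hv) j
    rw [hC] at this
    exact ⟨mem_of_mem_erase this, ne_of_mem_erase this⟩
  have hvinj : ∀ v ∈ Pi, Function.Injective v := by
    intro v hv a b hab
    exact hblock ((hmemPi v hv a).1) (hab ▸ (hmemPi v hv b).1)
  have hpinj : Function.Injective p := by
    intro a b hab
    exact hblock (hpF a) (hab ▸ hpF b)
  have hWf : ∀ (A) (v), v ∈ Pi → W A v ⊆ f := by
    intro A v hv x hx
    rcases mem_union.1 hx with hx | hx
    · obtain ⟨j, _, rfl⟩ := mem_image.1 hx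
      exact hFf j (hmemPi v hv j).1
    · obtain ⟨j, _, rfl⟩ := mem_image.1 hx
      exact hFf j (hpF j)
  have hWcard : ∀ (A) (v), v ∈ Pi → (W A v).card = d + 1 := by
    intro A v hv
    rw [hW]
    rw [card_union_of_disjoint, card_image_of_injective _ (hvinj v hv),
      card_image_of_injective _ hpinj, card_compl]
    · have hA : A.card ≤ d + 1 := by
        simpa using Finset.card_le_card (Finset.subset_univ A)
      simp [Fintype.card_fin]
      omega
    · rw [disjoint_left]
      intro x hx hx'
      obtain ⟨j, _, rfl⟩ := mem_image.1 hx
      obtain ⟨j', _, h⟩ := mem_image.1 hx'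
      have hj : j' = j := hblock (hpF j') (h ▸ (hmemPi v hv j).1)
      exact (hmemPi v hv j).2 (by rw [← h, hj])
  have hPicard : Pi.card = (N-1)^(d+1) := by
    rw [hPidef, Fintype.card_piFinset]
    simp [hCcard]
  have hgoodex : ∃ v ∈ Pi, ∀ (A : Finset (Fin (d+1))) (i : Fin (d+1)),
      i ∉ A → v i ∉ gsel (W A v) := by
    by_contra hng
    push_neg at hng
    set P : Finset (Finset (Fin (d+1)) × Fin (d+1)) :=
      Finset.univ.filter (fun q => q.2 ∉ q.1) with hPdef
    have hsub : Pi ⊆ P.biUnion (fun q => Pi.filter (fun v => v q.2 ∈ gsel (W q.1 v))) := by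
      intro v hv
      obtain ⟨A, i, hiA, hbad⟩ := hng v hv
      exact mem_biUnion.2 ⟨(A, i), by simp [hPdef, hiA], mem_filter.2 ⟨hv, hbad⟩⟩
    have hbadcard : ∀ q ∈ P, (Pi.filter (fun v => v q.2 ∈ gsel (W q.1 v))).card
        ≤ (t - (d+1)) * (N-1)^d := by
      rintro ⟨A, i⟩ hq
      have hiA : i ∉ A := by simpa [hPdef] using hq
      set S := Pi.filter (fun v => v i ∈ gsel (W A v)) with hSdef
      set ρ : (Fin (d+1) → α) → (Fin (d+1) → α) := fun v => Function.update v i (p i) with hρ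
      have hWρ : ∀ v, W A (ρ v) = W A v := by
        intro v
        simp only [hW]
        congr 1
        apply image_congr
        intro j hj
        have hji : j ≠ i := fun h => hiA (h ▸ hj)
        simp [hρ, Function.update_of_ne hji]
      have hnotW : ∀ v ∈ Pi, v i ∉ W A v := by
        intro v hv hmem
        rcases mem_union.1 hmem with h | h
        · obtain ⟨j, hj, hco⟩ := mem_image.1 h
          have : j = i := hvinj v hv hco
          exact hiA (this ▸ hj)
        · obtain ⟨j, _, hco⟩ := mem_image.1 h
          have hji : j = i := hblock (hpF j) (hco ▸ (hmemPi v hv i).1)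
          exact (hmemPi v hv i).2 (by rw [← hco, hji])
      have h1 : S.card ≤ (t - (d+1)) * (S.image ρ).card := by
        apply Finset.card_le_mul_card_image
        intro b hb
        obtain ⟨v₀, hv₀S, hv₀⟩ := mem_image.1 hb
        have hv₀Pi : v₀ ∈ Pi := (mem_filter.1 hv₀S).1
        have hWb : W A b = W A v₀ := by rw [← hv₀, hWρ]
        have hWcard' : (W A v₀).card = d + 1 := hWcard A v₀ hv₀Pi
        have hWsub : W A v₀ ⊆ f := hWf A v₀ hv₀Pi
        obtain ⟨_, hg2, hg3⟩ := hgsel (W A v₀) hWsub hWcard'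
        set Fib := S.filter (fun x => ρ x = b) with hFib
        have hfib : ∀ v ∈ Fib,
            v i ∈ gsel (W A v₀) \ W A v₀ := by
          intro v hv
          obtain ⟨hvS, hvρ⟩ := mem_filter.1 hv
          obtain ⟨hvPi, hvg⟩ := mem_filter.1 hvS
          have hWv : W A v = W A v₀ := by
            rw [← hWρ v, hvρ, hWb]
          refine mem_sdiff.2 ⟨?_, ?_⟩
          · rw [← hWv]; exact hvg
          · rw [← hWv]; exact hnotW v hvPi
        have hinj : Set.InjOn (fun v : Fin (d+1) → α => v i) ↑Fib := by
          intro v hv v' hv' hvv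
          have h1 : ρ v = b := (mem_filter.1 (Finset.mem_coe.1 hv)).2
          have h2 : ρ v' = b := (mem_filter.1 (Finset.mem_coe.1 hv')).2
          funext j
          by_cases hji : j = i
          · subst hji; exact hvv
          · have e1 : v j = ρ v j := by simp [hρ, Function.update_of_ne hji]
            have e2 : v' j = ρ v' j := by simp [hρ, Function.update_of_ne hji]
            rw [e1, e2, h1, h2]
        calc Fib.card
            ≤ (gsel (W A v₀) \ W A v₀).card :=
              Finset.card_le_card_of_injOn _ hfib hinj
          _ ≤ (gsel (W A v₀)).card - (W A v₀).card := le_of_eq (card_sdiff_of_subset hg2)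
          _ ≤ t - (d+1) := by
              rw [hWcard']
              omega
      have h2 : (S.image ρ).card ≤ (N-1)^d := by
        have hsub2 : S.image ρ ⊆ Fintype.piFinset (Function.update C i {p i}) := by
          intro b hb
          obtain ⟨v, hvS, rfl⟩ := mem_image.1 hb
          have hvPi : v ∈ Pi := (mem_filter.1 hvS).1
          rw [Fintype.mem_piFinset]
          intro j
          by_cases hji : j = i
          · subst hji
            simp [hρ]
          · rw [Function.update_of_ne hji]
            have : ρ v j = v j := by simp [hρ, Function.update_of_ne hji]
            rw [this]
            exact Fintype.mem_piFinset.1 hvPi j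
        calc (S.image ρ).card ≤ (Fintype.piFinset (Function.update C i {p i})).card :=
              card_le_card hsub2
          _ = ∏ j, (Function.update C i ({p i} : Finset α) j).card := Fintype.card_piFinset _
          _ = (N-1)^d := by
              rw [← Finset.prod_compl_mul_prod ({i} : Finset (Fin (d+1)))]
              have e1 : ∏ j ∈ ({i} : Finset (Fin (d+1))), (Function.update C i ({p i} : Finset α) j).card = 1 := by
                simp
              have e2 : ∏ j ∈ ({i} : Finset (Fin (d+1)))ᶜ, (Function.update C i ({p i} : Finset α) j).card = (N-1)^d := by
                rw [Finset.prod_congr rfl (fun j hj => ?_)]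
                · rw [Finset.prod_const]
                  congr 1
                  rw [card_compl]
                  simp
                · have hji : j ≠ i := by
                    simpa using (Finset.mem_compl.1 hj)
                  rw [Function.update_of_ne hji, hCcard]
              rw [e1, e2, mul_one]
      calc S.card ≤ (t - (d+1)) * (S.image ρ).card := h1
        _ ≤ (t - (d+1)) * (N-1)^d := Nat.mul_le_mul_left _ h2
    have hPcard : P.card ≤ (d+1) * 2^(d+1) := by
      calc P.card ≤ (Finset.univ : Finset (Finset (Fin (d+1)) × Fin (d+1))).card :=
            card_le_card (filter_subset _ _)
        _ = (d+1) * 2^(d+1) := by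
            simp [Fintype.card_finset, mul_comm]
    have htotal : Pi.card ≤ (N - 2) * (N-1)^d := by
      calc Pi.card ≤ (P.biUnion (fun q => Pi.filter (fun v => v q.2 ∈ gsel (W q.1 v)))).card :=
            card_le_card hsub
        _ ≤ ∑ q ∈ P, (Pi.filter (fun v => v q.2 ∈ gsel (W q.1 v))).card := card_biUnion_le
        _ ≤ P.card * ((t - (d+1)) * (N-1)^d) := by
            rw [← smul_eq_mul]
            exact Finset.sum_le_card_nsmul _ _ _ hbadcard
        _ ≤ ((d+1) * 2^(d+1)) * ((t - (d+1)) * (N-1)^d) :=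
            Nat.mul_le_mul_right _ hPcard
        _ = (N - 2) * (N-1)^d := by
            have h : N - 2 = (d+1) * 2^(d+1) * (t - (d+1)) := by omega
            rw [h]
            ring
    rw [hPicard, pow_succ] at htotal
    have hpow : 0 < (N-1)^d := Nat.pow_pos (by omega)
    have h' : (N-1) ≤ (N-2) := by
      rw [mul_comm ((N:ℕ)-2) _] at htotal
      exact Nat.le_of_mul_le_mul_left htotal hpow
    omega
  obtain ⟨v, hvPi, hvgood⟩ := hgoodex
  refine absurd (hVC (Finset.univ.image v) ?_ ?_) ?_
  · intro x hx
    obtain ⟨j, _, rfl⟩ := mem_image.1 hx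
    exact hfV (hFf j (hmemPi v hvPi j).1)
  · intro B hB
    set A : Finset (Fin (d+1)) := Finset.univ.filter (fun j => v j ∈ B) with hA
    have hAB : A.image v = B := by
      apply Finset.Subset.antisymm
      · intro x hx
        obtain ⟨j, hj, rfl⟩ := mem_image.1 hx
        exact (mem_filter.1 hj).2
      · intro x hx
        obtain ⟨j, _, rfl⟩ := mem_image.1 (hB hx)
        exact mem_image_of_mem v (mem_filter.2 ⟨mem_univ _, hx⟩)
    obtain ⟨hg1, hg2, hg3⟩ := hgsel (W A v) (hWf A v hvPi) (hWcard A v hvPi)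
    refine ⟨gsel (W A v), hg1, ?_⟩
    apply Finset.Subset.antisymm
    · intro x hx
      obtain ⟨hxg, hxT⟩ := mem_inter.1 hx
      obtain ⟨j, _, rfl⟩ := mem_image.1 hxT
      by_cases hjA : j ∈ A
      · exact (mem_filter.1 hjA).2
      · exact absurd hxg (hvgood A j hjA)
    · intro x hx
      refine mem_inter.2 ⟨hg2 ?_, hB hx⟩
      simp only [hW]
      exact mem_union_left _ (hAB ▸ hx : x ∈ A.image v)
  · intro hle
    have : (Finset.univ.image v).card = d + 1 := by
      rw [card_image_of_injective _ (hvinj v hvPi)]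
      simp
    omega

/-- Every shrinkable hypergraph `H = (V, E)` of VC-dimension at
most `d` (`d ≥ 2`) with at least `2d+2` vertices satisfies, for every `k ≥ 2`
and every `c ≥ 4(d+1)^(d+1)`: there is a `k`-coloring of the `(d+1)`-element
subsets of `V` such that every hyperedge with at least `c^(k-1)` vertices
contains, for each color, a `(d+1)`-element subset of that color. -/
theorem shrinkable_boundedVC_tuple_coloring
    {α : Type*} [DecidableEq α] (V : Finset α) (E : Set (Finset α))
    (hE : ∀ e ∈ E, e ⊆ V)
    (d : ℕ) (hd : 2 ≤ d)
    (hshrink : ∀ e ∈ E, ∀ i : ℕ, 1 ≤ i → i ≤ e.card →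
      ∃ e' ∈ E, e' ⊆ e ∧ e'.card = i)
    (hVC : ∀ S : Finset α, S ⊆ V →
      (∀ B : Finset α, B ⊆ S → ∃ e ∈ E, e ∩ S = B) → S.card ≤ d)
    (hn : 2 * d + 2 ≤ V.card)
    (k : ℕ) (hk : 2 ≤ k)
    (c : ℝ) (hc : 4 * ((d : ℝ) + 1) ^ (d + 1) ≤ c) :
    ∃ χ : Finset α → Fin k,
      ∀ e ∈ E, c ^ (k - 1) ≤ (e.card : ℝ) →
        ∀ i : Fin k, ∃ T ⊆ e, T.card = d + 1 ∧ χ T = i := by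
  classical
  set c₀ : ℕ := 4 * (d+1)^(d+1) with hc₀
  have hd1pow : d + 1 ≤ (d+1)^(d+1) := by
    calc d + 1 = (d+1)^1 := (pow_one _).symm
      _ ≤ (d+1)^(d+1) := Nat.pow_le_pow_right (by omega) (by omega)
  have hd1c₀ : d + 1 ≤ c₀ := by omega
  have hc₀two : 2 ≤ c₀ := by omega
  set τ : ℕ → ℕ := fun j => max (d+1) (c₀^(j-1)) with hτ
  have hτd : ∀ j, d + 1 ≤ τ j := fun j => le_max_left _ _
  have hτmono : ∀ a b : ℕ, a ≤ b → τ a ≤ τ b := by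
    intro a b hab
    exact max_le_max le_rfl (Nat.pow_le_pow_right (by omega) (by omega))
  set ν : Finset α → ℕ :=
    fun T => ((Finset.Icc 1 (k-1)).filter (fun j => ∀ g ∈ E, T ⊆ g → τ j < g.card)).card
    with hν
  have hνlt : ∀ T, ν T < k := by
    intro T
    have h := Finset.card_filter_le (Finset.Icc 1 (k-1))
      (fun j => ∀ g ∈ E, T ⊆ g → τ j < g.card)
    rw [Nat.card_Icc] at h
    rw [hν]
    simp only
    omega
  refine ⟨fun T => ⟨ν T, hνlt T⟩, ?_⟩
  intro e he hecard i
  have hc₀e : c₀^(k-1) ≤ e.card := by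
    have h1 : (c₀:ℝ) ≤ c := by
      rw [hc₀]; push_cast; exact hc
    have h2 : ((c₀^(k-1) : ℕ) : ℝ) ≤ (e.card : ℝ) := by
      push_cast
      calc (c₀:ℝ)^(k-1) ≤ c^(k-1) := by
            apply pow_le_pow_left₀ (by positivity) h1
        _ ≤ e.card := hecard
    exact_mod_cast h2
  have hk1 : 1 ≤ k - 1 := by omega
  have hc₀k : c₀ ≤ c₀^(k-1) := by
    calc c₀ = c₀^1 := (pow_one _).symm
      _ ≤ c₀^(k-1) := Nat.pow_le_pow_right (by omega) hk1
  by_cases hi0 : (i : ℕ) = 0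
  · obtain ⟨T, hTE, hTe, hTcard⟩ := hshrink e he (d+1) (by omega) (by omega)
    refine ⟨T, hTe, hTcard, ?_⟩
    apply Fin.ext
    show ν T = (i : ℕ)
    rw [hi0, hν]
    simp only
    rw [Finset.card_eq_zero.2 ?_]
    apply Finset.filter_eq_empty_iff.2
    intro j hj
    push_neg
    exact ⟨T, hTE, Finset.Subset.refl T, by rw [hTcard]; exact hτd j⟩
  · set m := (i : ℕ) with hm
    have hm1 : 1 ≤ m := by omega
    have hmk : m ≤ k - 1 := by
      have := i.isLt
      omega
    have hc₀me : c₀^m ≤ e.card :=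
      le_trans (Nat.pow_le_pow_right (by omega) hmk) hc₀e
    obtain ⟨f, hfE, hfe, hfcard⟩ := hshrink e he (c₀^m)
      (Nat.one_le_pow _ _ (by omega)) hc₀me
    have hfV : f ⊆ V := hfe.trans (hE e he)
    have hkey : (d+1) * ((d+1) * 2^(d+1) * (τ m - (d+1)) + 2) ≤ f.card := by
      rw [hfcard]
      rcases Nat.eq_or_lt_of_le hm1 with h1 | h2
      · -- m = 1
        have hτ1 : τ m = d + 1 := by
          rw [hτ, ← h1]
          simp
        rw [hτ1]
        simp only [Nat.sub_self, Nat.mul_zero, Nat.zero_add]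
        calc (d+1) * 2 ≤ 4 * (d+1) := by omega
          _ ≤ 4 * (d+1)^(d+1) := by
              exact Nat.mul_le_mul_left _ hd1pow
          _ = c₀^1 := by rw [pow_one]
          _ ≤ c₀^m := Nat.pow_le_pow_right (by omega) hm1
      · -- m ≥ 2
        have hm2 : 2 ≤ m := h2
        have hx : c₀ ≤ c₀^(m-1) := by
          calc c₀ = c₀^1 := (pow_one _).symm
            _ ≤ c₀^(m-1) := Nat.pow_le_pow_right (by omega) (by omega)
        have hτm : τ m = c₀^(m-1) := by
          rw [hτ]
          simp only
          exact max_eq_right (le_trans hd1c₀ hx)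
        have hK : (d+1) * ((d+1) * 2^(d+1)) ≤ c₀ := by
          have h2p : (2:ℕ)^(d-1) ≤ (d+1)^(d-1) := Nat.pow_le_pow_left (by omega) _
          have e1 : d + 1 = (d-1) + 2 := by omega
          have e2 : (2:ℕ)^(d+1) = 2^(d-1) * 4 := by
            rw [e1, pow_add]; norm_num
          have e3 : (d+1)^(d+1) = (d+1)^(d-1) * ((d+1) * (d+1)) := by
            rw [e1, pow_add]; ring
          rw [e2, hc₀, e3]
          calc (d+1) * ((d+1) * (2^(d-1) * 4)) = (2^(d-1)) * (4 * ((d+1) * (d+1))) := by ring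
            _ ≤ ((d+1)^(d-1)) * (4 * ((d+1) * (d+1))) :=
                Nat.mul_le_mul_right _ h2p
            _ = 4 * ((d+1)^(d-1) * ((d+1) * (d+1))) := by ring
        have hxd : d + 1 ≤ c₀^(m-1) := le_trans hd1c₀ hx
        rw [hτm]
        have step1 : (d+1) * ((d+1) * 2^(d+1) * (c₀^(m-1) - (d+1)) + 2)
            = (d+1) * ((d+1) * 2^(d+1)) * (c₀^(m-1) - (d+1)) + 2 * (d+1) := by ring
        rw [step1]
        have step2 : (d+1) * ((d+1) * 2^(d+1)) * (c₀^(m-1) - (d+1))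
            ≤ c₀ * (c₀^(m-1) - (d+1)) := Nat.mul_le_mul_right _ hK
        have step3 : 2 * (d+1) ≤ c₀ * (d+1) := Nat.mul_le_mul_right _ hc₀two
        have step4 : c₀ * (c₀^(m-1) - (d+1)) + c₀ * (d+1) = c₀ * c₀^(m-1) := by
          rw [← Nat.mul_add, Nat.sub_add_cancel hxd]
        have step5 : c₀ * c₀^(m-1) = c₀^m := by
          rw [← pow_succ']
          congr 1
          omega
        omega
    obtain ⟨T, hTf, hTcard, hTlb⟩ := claimB V E d hVC (τ m) (hτd m) f hfV hkey
    refine ⟨T, hTf.trans hfe, hTcard, ?_⟩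
    apply Fin.ext
    show ν T = m
    rw [hν]
    simp only
    have hfilter : (Finset.Icc 1 (k-1)).filter (fun j => ∀ g ∈ E, T ⊆ g → τ j < g.card)
        = Finset.Icc 1 m := by
      ext j
      simp only [Finset.mem_filter, Finset.mem_Icc]
      constructor
      · rintro ⟨⟨hj1, hj2⟩, hcond⟩
        refine ⟨hj1, ?_⟩
        by_contra hmj
        push_neg at hmj
        have hcf := hcond f hfE hTf
        rw [hfcard] at hcf
        have hge : c₀^m ≤ τ j := by
          calc c₀^m ≤ c₀^(j-1) := Nat.pow_le_pow_right (by omega) (by omega)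
            _ ≤ τ j := le_max_right _ _
        omega
      · rintro ⟨hj1, hj2⟩
        refine ⟨⟨hj1, le_trans hj2 hmk⟩, ?_⟩
        intro g hg hTg
        exact lt_of_le_of_lt (hτmono j m hj2) (hTlb g hg hTg)
    rw [hfilter, Nat.card_Icc]
    omega
end

section
/- Let d ≥ 2 be an integer and let H = (V, E) be a hypergraph with VC-dimension at most d and with n = |V| ≥ 2d + 2 vertices. Then there exists a (d+1)-element subset T ⊆ V such that every hyperedge e ∈ E with T ⊆ e satisfies |e \ T| ≥ n / (4(d+1)^{d+1}). -/
/-!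
Suppose every `(d+1)`-set `T ⊆ V` lies in an edge with fewer than `r = n / (4(d+1)^(d+1))`
vertices outside `T`. If `r ≤ 1`, every `(d+1)`-set is an edge, and as `n ≥ 2(d+1)` any
`(d+1)`-set is shattered. Otherwise every set `A` of at most `d+1` vertices lies in an edge
`cov A` with at most `s = ⌊r⌋ + d + 1` vertices. For a uniformly random tuple `x ∈ V^(d+1)`, the
probability that `x j ∈ cov {x i | i ∈ I}` for some `j ∉ I` is at most `2^(d+1) (d+1) s / n < 1`.
A tuple avoiding all these events has distinct entries, and its image `S` satisfies
`cov B ∩ S = B` for every `B ⊆ S`, so `S` is shattered, contradicting VC-dimension `≤ d`.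
-/

open Finset

section

variable {α ι : Type*} [DecidableEq α] [Fintype ι] [DecidableEq ι]

/-- Multiplied by `#V` to avoid the truncated exponent `card ι - 1`. -/
theorem card_filter_apply_mem_mul_card_le {V : Finset α} {s : ℕ} (j : ι)
    (F : (ι → α) → Finset α) (hF : ∀ x v, F (Function.update x j v) = F x)
    (hs : ∀ x ∈ Fintype.piFinset fun _ => V, #(F x) ≤ s) :
    #{x ∈ Fintype.piFinset (fun _ => V) | x j ∈ F x} * #V ≤ s * #V ^ Fintype.card ι := by
  obtain rfl | ⟨v₀, hv₀⟩ := V.eq_empty_or_nonempty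
  · simp
  set A := Fintype.piFinset (Function.update (fun _ => V) j {v₀})
  have hA : #A * #V = #V ^ Fintype.card ι := by
    have hcard : ∀ i, #(Function.update (fun _ => V) j {v₀} i) =
        Function.update (fun _ => #V) j 1 i := fun i => by
      rcases eq_or_ne i j with rfl | hi <;> simp [*]
    rw [Fintype.card_piFinset, Fintype.prod_congr _ _ hcard, prod_update_of_mem (mem_univ j),
      one_mul, prod_const, ← pow_succ, card_sdiff_of_subset (by simp), card_singleton, card_univ,
      Nat.sub_add_cancel (Fintype.card_pos_iff.2 ⟨j⟩)]
  have hAΩ : A ⊆ Fintype.piFinset fun _ => V := by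
    refine Fintype.piFinset_subset _ _ fun i => ?_
    rcases eq_or_ne i j with rfl | hi <;> simp [*]
  have hbad : #{x ∈ Fintype.piFinset (fun _ => V) | x j ∈ F x} ≤ #(A.sigma F) := by
    refine card_le_card_of_injOn (fun x => ⟨Function.update x j v₀, x j⟩) ?_ ?_
    · intro x hx
      simp only [coe_filter, Fintype.mem_piFinset, Set.mem_ofPred_eq] at hx
      simp only [coe_sigma, Set.mem_sigma_iff, mem_coe, hF, hx.2, and_true, A,
        Fintype.mem_piFinset]
      intro i
      rcases eq_or_ne i j with rfl | hi <;> simp [*]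
    · intro x _ y _ hxy
      simp only [Sigma.mk.inj_iff, heq_eq_eq] at hxy
      have h := congrArg (Function.update · j (x j)) hxy.1
      simp only [Function.update_idem, Function.update_eq_self] at h
      rw [h, hxy.2, Function.update_eq_self]
  calc #{x ∈ Fintype.piFinset (fun _ => V) | x j ∈ F x} * #V
      ≤ (∑ y ∈ A, #(F y)) * #V := by rw [← card_sigma]; gcongr
    _ ≤ #A * s * #V := by gcongr; exact sum_le_card_nsmul _ _ _ fun y hy => hs y (hAΩ hy)
    _ = s * #V ^ Fintype.card ι := by rw [← hA]; ring

theorem exists_mem_piFinset_forall_apply_notMem_image {V : Finset α} {s : ℕ}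
    (cov : Finset α → Finset α) (hcov : ∀ A ⊆ V, #A ≤ Fintype.card ι → #(cov A) ≤ s)
    (hV : 2 ^ Fintype.card ι * Fintype.card ι * s < #V) :
    ∃ x ∈ Fintype.piFinset (fun _ : ι => V),
      ∀ (I : Finset ι) j, j ∉ I → x j ∉ cov (I.image x) := by
  set Ω := Fintype.piFinset (fun _ : ι => V)
  set k := Fintype.card ι
  have hΩ : #Ω = #V ^ k := by simp [Ω, k]
  let P : Finset (Finset ι × ι) := {p | p.2 ∉ p.1}
  let bad (p : Finset ι × ι) : Finset (ι → α) := {x ∈ Ω | x p.2 ∈ cov (p.1.image x)}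
  have hbad : ∀ p ∈ P, #(bad p) * #V ≤ s * #V ^ k := by
    rintro ⟨I, j⟩ hp
    refine card_filter_apply_mem_mul_card_le j _ (fun x v => ?_) fun x hx => hcov _ ?_ ?_
    · refine congrArg cov (image_congr fun i hi => Function.update_of_ne ?_ _ _)
      rintro rfl
      exact (mem_filter.1 hp).2 hi
    · simpa [Finset.image_subset_iff] using fun i _ => Fintype.mem_piFinset.1 hx i
    · exact card_image_le.trans (card_le_univ I)
  have hP : #P ≤ 2 ^ k * k :=
    (card_filter_le _ _).trans (by simp [k, Fintype.card_finset])
  have hlt : #(P.biUnion bad) < #Ω := by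
    refine lt_of_mul_lt_mul_right ?_ (Nat.zero_le #V)
    calc #(P.biUnion bad) * #V ≤ ∑ p ∈ P, #(bad p) * #V := by
          rw [← sum_mul]; gcongr; exact card_biUnion_le
      _ ≤ #P * (s * #V ^ k) := sum_le_card_nsmul _ _ _ hbad
      _ ≤ 2 ^ k * k * s * #V ^ k := by rw [← mul_assoc]; gcongr
      _ < #V * #V ^ k := Nat.mul_lt_mul_of_pos_right hV (pow_pos (pos_of_gt hV) _)
      _ = #Ω * #V := by rw [hΩ, mul_comm]
  obtain ⟨x, hxΩ, hx⟩ := exists_mem_notMem_of_card_lt_card hlt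
  refine ⟨x, hxΩ, fun I j hj hmem => hx ?_⟩
  exact mem_biUnion.2 ⟨(I, j), mem_filter.2 ⟨mem_univ _, hj⟩, mem_filter.2 ⟨hxΩ, hmem⟩⟩

theorem exists_subset_card_eq_forall_inter_eq {V : Finset α} {k s : ℕ}
    (cov : Finset α → Finset α) (hcov : ∀ A ⊆ V, #A ≤ k → A ⊆ cov A ∧ #(cov A) ≤ s)
    (hV : 2 ^ k * k * s < #V) :
    ∃ S ⊆ V, #S = k ∧ ∀ B ⊆ S, cov B ∩ S = B := by
  obtain ⟨x, hxV, hx⟩ := exists_mem_piFinset_forall_apply_notMem_image (ι := Fin k) cov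
    (fun A hA hAk => (hcov A hA (by simpa using hAk)).2) (by simpa using hV)
  have hxV : ∀ i, x i ∈ V := Fintype.mem_piFinset.1 hxV
  have hinj : Function.Injective x := by
    intro i j hij
    by_contra hne
    refine hx {i} j (by simpa using Ne.symm hne) ?_
    rw [image_singleton, ← hij]
    have hcov_i := hcov {x i} (by simpa using hxV i) (by simpa using i.pos.nat_succ_le)
    exact hcov_i.1 (mem_singleton_self _)
  have hSV : univ.image x ⊆ V := by simpa [image_subset_iff] using hxV
  refine ⟨univ.image x, hSV, by simp [card_image_of_injective _ hinj], fun B hB => ?_⟩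
  have hBcov := hcov B (hB.trans hSV) ((card_le_card hB).trans (card_image_le.trans (by simp)))
  refine subset_antisymm (fun v hv => ?_) (subset_inter hBcov.1 hB)
  obtain ⟨hvB, hvS⟩ := mem_inter.1 hv
  obtain ⟨j, -, rfl⟩ := mem_image.1 hvS
  by_contra hjB
  refine hx ({i | x i ∈ B} : Finset (Fin k)) j (by simpa using hjB) ?_
  rwa [← filter_image (p := (· ∈ B)), filter_mem_eq_inter, inter_eq_right.2 hB]

def Set.Shatters (E : Set (Finset α)) (S : Finset α) : Prop :=
  ∀ B ⊆ S, ∃ e ∈ E, e ∩ S = B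

theorem exists_shatters_of_forall_card_eq_mem {E : Set (Finset α)} {V : Finset α} {k : ℕ}
    (hE : ∀ T ⊆ V, #T = k → T ∈ E) (hV : 2 * k ≤ #V) :
    ∃ S ⊆ V, #S = k ∧ E.Shatters S := by
  obtain ⟨S, hSV, hS⟩ := exists_subset_card_eq (show k ≤ #V by omega)
  refine ⟨S, hSV, hS, fun B hB => ?_⟩
  have hBS := card_le_card hB
  obtain ⟨C, hC, hCcard⟩ := exists_subset_card_eq (s := V \ S) (n := k - #B)
    (by rw [card_sdiff_of_subset hSV]; omega)
  have hCS : Disjoint C S := disjoint_of_subset_left hC sdiff_disjoint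
  refine ⟨B ∪ C, hE _ (union_subset (hB.trans hSV) (hC.trans sdiff_subset)) ?_, ?_⟩
  · rw [card_union_of_disjoint (disjoint_of_subset_left hB hCS.symm)]
    omega
  · rw [union_inter_distrib_right, inter_eq_left.2 hB, disjoint_iff_inter_eq_empty.1 hCS,
      union_empty]

theorem exists_shatters_of_forall_exists_superset {E : Set (Finset α)} {V : Finset α}
    {k s : ℕ} (hE : ∀ A ⊆ V, #A ≤ k → ∃ e ∈ E, A ⊆ e ∧ #e ≤ s) (hV : 2 ^ k * k * s < #V) :
    ∃ S ⊆ V, #S = k ∧ E.Shatters S := by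
  choose! cov hcovE hcov using hE
  obtain ⟨S, hSV, hS, hcovS⟩ :=
    exists_subset_card_eq_forall_inter_eq cov hcov hV
  refine ⟨S, hSV, hS, fun B hB => ⟨cov B, hcovE B (hB.trans hSV) ?_, hcovS B hB⟩⟩
  exact hS ▸ card_le_card hB

end

theorem two_pow_mul_le_four_mul_pow {d : ℕ} (hd : 2 ≤ d) :
    2 ^ (d + 1) * (d + 2) ≤ 4 * (d + 1) ^ d := by
  induction d, hd using Nat.le_induction with
  | base => norm_num
  | succ d hd ih =>
    calc 2 ^ (d + 2) * (d + 3) = 2 ^ (d + 1) * (2 * d + 6) := by ring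
      _ ≤ 2 ^ (d + 1) * ((d + 2) * (d + 2)) := by gcongr; nlinarith
      _ = 2 ^ (d + 1) * (d + 2) * (d + 2) := by ring
      _ ≤ 4 * (d + 1) ^ d * (d + 2) := by gcongr
      _ ≤ 4 * (d + 2) ^ d * (d + 2) := by gcongr; omega
      _ = 4 * (d + 1 + 1) ^ (d + 1) := by ring

theorem two_pow_mul_mul_add_lt {d : ℕ} (hd : 2 ≤ d) {r : ℝ} (hr : 1 < r) :
    2 ^ (d + 1) * (d + 1) * (r + (d + 1)) < 4 * ((d : ℝ) + 1) ^ (d + 1) * r := by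
  have h : (2 : ℝ) ^ (d + 1) * (d + 2) ≤ 4 * (d + 1) ^ d := by
    exact_mod_cast two_pow_mul_le_four_mul_pow hd
  calc (2 : ℝ) ^ (d + 1) * (d + 1) * (r + (d + 1))
      < 2 ^ (d + 1) * (d + 1) * ((d + 2) * r) := by gcongr; nlinarith
    _ = 2 ^ (d + 1) * (d + 2) * (d + 1) * r := by ring
    _ ≤ 4 * (d + 1) ^ d * (d + 1) * r := by gcongr
    _ = 4 * ((d : ℝ) + 1) ^ (d + 1) * r := by ring

theorem boundedVC_deep_tuple_general
    {α : Type*} [DecidableEq α] (V : Finset α) (E : Set (Finset α))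
    (d : ℕ) (hd : 2 ≤ d)
    (hVC : ∀ S : Finset α, S ⊆ V →
      (∀ B : Finset α, B ⊆ S → ∃ e ∈ E, e ∩ S = B) → S.card ≤ d)
    (hn : 2 * d + 2 ≤ V.card) :
    ∃ T ⊆ V, T.card = d + 1 ∧
      ∀ e ∈ E, T ⊆ e →
        (V.card : ℝ) / (4 * ((d : ℝ) + 1) ^ (d + 1)) ≤ ((e \ T).card : ℝ) := by
  set r : ℝ := (V.card : ℝ) / (4 * ((d : ℝ) + 1) ^ (d + 1))
  by_contra! hdeep
  suffices ∃ S ⊆ V, S.card = d + 1 ∧ E.Shatters S by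
    obtain ⟨S, hSV, hS, hshat⟩ := this
    have := hVC S hSV hshat
    omega
  rcases le_or_gt r 1 with hr1 | hr1
  · refine exists_shatters_of_forall_card_eq_mem (fun T hTV hT => ?_) (by omega)
    obtain ⟨e, he, hTe, hlt⟩ := hdeep T hTV hT
    have hcard : #(e \ T) < 1 := by exact_mod_cast hlt.trans_le hr1
    rwa [(sdiff_eq_empty_iff_subset.1 (card_eq_zero.1 (by omega))).antisymm hTe] at he
  · refine exists_shatters_of_forall_exists_superset (s := ⌊r⌋₊ + (d + 1))
      (fun A hAV hA => ?_) ?_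
    · obtain ⟨T, hAT, hTV, hT⟩ := exists_subsuperset_card_eq hAV hA (by omega)
      obtain ⟨e, he, hTe, hlt⟩ := hdeep T hTV hT
      have := Nat.le_floor hlt.le
      have := card_sdiff_add_card_eq_card hTe
      exact ⟨e, he, hAT.trans hTe, by omega⟩
    · have hV : (#V : ℝ) = 4 * ((d : ℝ) + 1) ^ (d + 1) * r := by
        simp only [r]; field_simp
      have : ((2 ^ (d + 1) * (d + 1) * (⌊r⌋₊ + (d + 1)) : ℕ) : ℝ) < #V := by
        rw [hV]; push_cast
        refine lt_of_le_of_lt ?_ (two_pow_mul_mul_add_lt hd hr1)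
        gcongr; exact Nat.floor_le (by linarith)
      exact_mod_cast this

/-- Every hypergraph `H = (V, E)` of VC-dimension at most `d`
(`d ≥ 2`) with `n ≥ 2d+2` vertices has a `(d+1)`-element subset `T ⊆ V` such
that every hyperedge containing `T` contains at least `n / (4(d+1)^(d+1))`
further vertices. -/
theorem boundedVC_deep_tuple
    {α : Type*} [DecidableEq α] (V : Finset α) (E : Set (Finset α))
    (hE : ∀ e ∈ E, e ⊆ V)
    (d : ℕ) (hd : 2 ≤ d)
    (hVC : ∀ S : Finset α, S ⊆ V →
      (∀ B : Finset α, B ⊆ S → ∃ e ∈ E, e ∩ S = B) → S.card ≤ d)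
    (hn : 2 * d + 2 ≤ V.card) :
    ∃ T ⊆ V, T.card = d + 1 ∧
      ∀ e ∈ E, T ⊆ e →
        (V.card : ℝ) / (4 * ((d : ℝ) + 1) ^ (d + 1)) ≤ ((e \ T).card : ℝ) :=
  boundedVC_deep_tuple_general V E d hd hVC hn
end

section
/- Let H = (V, E) be a hypergraph and let x, t, k, m be natural numbers with t ≥ 1, k ≥ 1, and binomial coefficient C(x, t) ≥ k. Suppose there exists a coloring φ : V → {1, …, x} such that every hyperedge e ∈ E with |e| ≥ m contains vertices of all x colors. Then there exists a coloring ξ of the t-element subsets of V with k colors such that every hyperedge e ∈ E with |e| ≥ m contains, for each of the k colors, a t-element subset of e with that color. -/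
/-- If a hypergraph admits a vertex `x`-coloring making every
hyperedge with at least `m` vertices polychromatic, and `C(x, t) ≥ k` with
`t, k ≥ 1`, then it admits a `k`-coloring of its `t`-element subsets making
every hyperedge with at least `m` vertices polychromatic for tuples. -/
theorem vertex_coloring_to_tuple_coloring
    {α : Type*} (E : Set (Finset α))
    (x t k m : ℕ) (ht : 1 ≤ t) (hk : 1 ≤ k) (hchoose : k ≤ x.choose t)
    (φ : α → Fin x)
    (hφ : ∀ e ∈ E, m ≤ e.card → ∀ c : Fin x, ∃ v ∈ e, φ v = c) :
    ∃ ξ : Finset α → Fin k,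
      ∀ e ∈ E, m ≤ e.card → ∀ c : Fin k, ∃ T ⊆ e, T.card = t ∧ ξ T = c := by
  classical
  have hcard : Fintype.card (Fin k) ≤
      Fintype.card (Finset.powersetCard t (Finset.univ : Finset (Fin x))) := by
    simpa [Finset.card_powersetCard] using hchoose
  obtain ⟨ι⟩ := Function.Embedding.nonempty_of_card_le hcard
  refine ⟨fun T => if h : ∃ c, (ι c : Finset (Fin x)) = T.image φ then h.choose
    else ⟨0, hk⟩, ?_⟩
  intro e he hm c
  set S : Finset (Fin x) := (ι c : Finset (Fin x)) with hS
  have hScard : S.card = t := by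
    have := (ι c).2
    rw [Finset.mem_powersetCard] at this
    exact this.2
  choose v hv1 hv2 using hφ e he hm
  refine ⟨S.image v, ?_, ?_, ?_⟩
  · intro a ha
    obtain ⟨s, _, rfl⟩ := Finset.mem_image.1 ha
    exact hv1 s
  · rw [Finset.card_image_of_injOn, hScard]
    intro a _ b _ hab
    rw [← hv2 a, ← hv2 b, hab]
  · have himg : (S.image v).image φ = S := by
      rw [Finset.image_image]
      refine Finset.image_congr (fun a _ => hv2 a) |>.trans Finset.image_id
    have h : ∃ c', (ι c' : Finset (Fin x)) = (S.image v).image φ := ⟨c, himg.symm⟩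
    beta_reduce
    rw [dif_pos h]
    exact ι.injective (Subtype.ext (h.choose_spec.trans (himg.trans hS)))
end

section
/- Let H = (V, E) be a hypergraph and let C ≥ 1 be a real constant such that for every natural number x ≥ 1 there exists a coloring of V with x colors under which every hyperedge with at least C·x vertices contains vertices of all x colors. Then for all natural numbers t ≥ 1 and k ≥ 1 with t·k^{1/t} ≥ 1, there exists a coloring of the t-element subsets of V with k colors under which every hyperedge e ∈ E with |e| ≥ C·⌈t·k^{1/t}⌉ contains, for each of the k colors, a t-element subset of e with that color. -/
/-!
Put `x = ⌈t·k^{1/t}⌉`. Since `(x/t)^t ≤ (x choose t)`, there are at least `k` subsets of size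
`t` of the `x` vertex colours; fix `k` of them, one per tuple colour. Give a `t`-set `T` of
vertices the tuple colour whose chosen colour set is the set of colours occurring on `T`. A
hyperedge with at least `C·x` vertices sees all `x` vertex colours, so for any chosen colour set
it contains a `t`-set of vertices carrying exactly those colours, one vertex per colour.
-/

open Finset

theorem Nat.pow_le_choose_of_mul_le {r : ℝ} (hr : 1 ≤ r) :
    ∀ {t n : ℕ}, t * r ≤ n → r ^ t ≤ n.choose t
  | 0, _, _ => by simp
  | t + 1, n, htn => by
    push_cast at htn
    have hn : 0 < n := by exact_mod_cast (show (0 : ℝ) < n by nlinarith)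
    obtain ⟨m, rfl⟩ := Nat.exists_eq_add_one.mpr hn
    push_cast at htn
    have ih : r ^ t ≤ m.choose t := pow_le_choose_of_mul_le hr (by linarith)
    -- `r ≤ (m + 1) / (t + 1)`, which is the ratio `(m + 1 choose t + 1) / (m choose t)`
    have hpascal : ((m : ℝ) + 1) * m.choose t = (m + 1).choose (t + 1) * ((t : ℝ) + 1) := by
      exact_mod_cast Nat.add_one_mul_choose_eq m t
    have hr_choose : r * m.choose t ≤ (m + 1).choose (t + 1) := by
      refine le_of_mul_le_mul_right ?_ (by positivity : (0 : ℝ) < t + 1)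
      nlinarith [(Nat.cast_nonneg (m.choose t) : (0 : ℝ) ≤ _)]
    calc r ^ (t + 1) = r * r ^ t := _root_.pow_succ' r t
      _ ≤ r * m.choose t := mul_le_mul_of_nonneg_left ih (by linarith)
      _ ≤ _ := hr_choose

theorem Nat.le_choose_ceil_mul_rpow_inv {t : ℕ} (ht : t ≠ 0) (k : ℕ) :
    k ≤ (⌈(t : ℝ) * (k : ℝ) ^ ((1 : ℝ) / t)⌉₊).choose t := by
  rcases Nat.eq_zero_or_pos k with rfl | hk
  · exact Nat.zero_le _
  have hroot : ((k : ℝ) ^ ((1 : ℝ) / t)) ^ t = k := by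
    rw [← Real.rpow_natCast, ← Real.rpow_mul k.cast_nonneg, one_div,
      inv_mul_cancel₀ (Nat.cast_ne_zero.mpr ht), Real.rpow_one]
  have hbound := Nat.pow_le_choose_of_mul_le
    (Real.one_le_rpow (Nat.one_le_cast.mpr hk) (one_div_nonneg.mpr t.cast_nonneg))
    (Nat.le_ceil ((t : ℝ) * (k : ℝ) ^ ((1 : ℝ) / t)))
  rw [hroot] at hbound
  exact_mod_cast hbound

theorem exists_tupleColoring_of_coloring {α β ι : Type*} [DecidableEq β] [Nonempty ι]
    (φ : α → β) {t : ℕ} (g : ι ↪ {S : Finset β // S.card = t}) :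
    ∃ χ : Finset α → ι, ∀ e : Finset α, (∀ b, ∃ v ∈ e, φ v = b) →
      ∀ c, ∃ T ⊆ e, T.card = t ∧ χ T = c := by
  have hg : Function.Injective fun c => (g c : Finset β) :=
    Subtype.val_injective.comp g.injective
  refine ⟨fun T => Function.invFun (fun c => (g c : Finset β)) (T.image φ), ?_⟩
  intro e hsurj c
  obtain ⟨T, hTe, hinj, himage⟩ :=
    exists_subset_injOn_image_eq_of_surjOn (e : Set α) (g c : Finset β) fun b _ => hsurj b
  refine ⟨T, coe_subset.mp hTe, ?_, ?_⟩
  · rw [← card_image_of_injOn hinj, himage, (g c).2]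
  · simp only [himage]
    exact Function.leftInverse_invFun hg c

theorem tuple_coloring_of_linear_vertex_coloring_general
    {α : Type*} (E : Set (Finset α)) (C : ℝ)
    (h : ∀ x : ℕ, 1 ≤ x → ∃ φ : α → Fin x,
      ∀ e ∈ E, C * (x : ℝ) ≤ (e.card : ℝ) → ∀ c : Fin x, ∃ v ∈ e, φ v = c) :
    ∀ t k : ℕ, 1 ≤ t → 1 ≤ k →
      (1 : ℝ) ≤ (t : ℝ) * (k : ℝ) ^ ((1 : ℝ) / t) →
      ∃ χ : Finset α → Fin k,
        ∀ e ∈ E,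
          C * (⌈(t : ℝ) * (k : ℝ) ^ ((1 : ℝ) / t)⌉₊ : ℝ) ≤ (e.card : ℝ) →
          ∀ c : Fin k, ∃ T ⊆ e, T.card = t ∧ χ T = c := by
  intro t k ht hk hge
  set x := ⌈(t : ℝ) * (k : ℝ) ^ ((1 : ℝ) / t)⌉₊
  obtain ⟨φ, hφ⟩ := h x (Nat.one_le_ceil_iff.mpr (one_pos.trans_le hge))
  have hcard : Fintype.card (Fin k) ≤ Fintype.card {S : Finset (Fin x) // S.card = t} := by
    rw [Fintype.card_finset_len, Fintype.card_fin, Fintype.card_fin]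
    exact Nat.le_choose_ceil_mul_rpow_inv (Nat.one_le_iff_ne_zero.mp ht) k
  obtain ⟨g⟩ := Function.Embedding.nonempty_of_card_le hcard
  have : Nonempty (Fin k) := ⟨⟨0, hk⟩⟩
  obtain ⟨χ, hχ⟩ := exists_tupleColoring_of_coloring φ g
  exact ⟨χ, fun e he hlarge => hχ e (hφ e he hlarge)⟩

/-- If for every `x ≥ 1` the vertices of `H` can be `x`-colored
so that every hyperedge with at least `C·x` vertices is polychromatic, then for
all `t, k ≥ 1` with `t·k^(1/t) ≥ 1` the `t`-element subsets can be `k`-colored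
so that every hyperedge with at least `C·⌈t·k^(1/t)⌉` vertices contains a
`t`-element subset of each color. -/
theorem tuple_coloring_of_linear_vertex_coloring
    {α : Type*} (E : Set (Finset α)) (C : ℝ) (hC : 1 ≤ C)
    (h : ∀ x : ℕ, 1 ≤ x → ∃ φ : α → Fin x,
      ∀ e ∈ E, C * (x : ℝ) ≤ (e.card : ℝ) → ∀ c : Fin x, ∃ v ∈ e, φ v = c) :
    ∀ t k : ℕ, 1 ≤ t → 1 ≤ k →
      (1 : ℝ) ≤ (t : ℝ) * (k : ℝ) ^ ((1 : ℝ) / t) →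
      ∃ χ : Finset α → Fin k,
        ∀ e ∈ E,
          C * (⌈(t : ℝ) * (k : ℝ) ^ ((1 : ℝ) / t)⌉₊ : ℝ) ≤ (e.card : ℝ) →
          ∀ c : Fin k, ∃ T ⊆ e, T.card = t ∧ χ T = c :=
  tuple_coloring_of_linear_vertex_coloring_general E C h
end

section
/- Let H = (V, E) be a hypergraph with n = |V| vertices, and let C ≥ 1 be a real constant such that for every natural number x ≥ 1 there exists a coloring of V with x colors under which every hyperedge with at least C·x vertices contains vertices of all x colors. Let 0 < ε < 1 be a real number and t ≥ 1 a natural number with ε·n ≥ 2·C·t. Then the t-element subsets of V can be partitioned into at least ⌊(ε·n/(2·C·t))^t⌋ pairwise disjoint classes, each of which is an ε-t-net for H. -/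
/-- If for every `x ≥ 1` the vertices of `H = (V, E)` can be
`x`-colored so that every hyperedge with at least `C·x` vertices is
polychromatic, then for `0 < ε < 1` and `t ≥ 1` with `ε·n ≥ 2·C·t`
(`n = |V|`), the `t`-element subsets of `V` can be partitioned into at least
`⌊(ε·n/(2·C·t))^t⌋` pairwise disjoint classes, each an `ε`-`t`-net for `H`
(every hyperedge with at least `ε·n` vertices contains a `t`-element subset
from each class). -/
theorem tuple_decomposition_into_epsilon_t_nets
    {α : Type*} (V : Finset α) (E : Set (Finset α)) (hE : ∀ e ∈ E, e ⊆ V)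
    (C : ℝ) (hC : 1 ≤ C)
    (h : ∀ x : ℕ, 1 ≤ x → ∃ φ : α → Fin x,
      ∀ e ∈ E, C * (x : ℝ) ≤ (e.card : ℝ) → ∀ c : Fin x, ∃ v ∈ e, φ v = c)
    (ε : ℝ) (hε0 : 0 < ε) (hε1 : ε < 1)
    (t : ℕ) (ht : 1 ≤ t)
    (hεn : 2 * C * (t : ℝ) ≤ ε * (V.card : ℝ)) :
    ∃ (M : ℕ) (χ : Finset α → Fin M),
      ⌊(ε * (V.card : ℝ) / (2 * C * (t : ℝ))) ^ t⌋₊ ≤ M ∧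
      ∀ c : Fin M, ∀ e ∈ E, ε * (V.card : ℝ) ≤ (e.card : ℝ) →
        ∃ T ⊆ e, T.card = t ∧ χ T = c := by
  classical
  set y : ℝ := ε * (V.card : ℝ) / (2 * C * (t : ℝ)) with hy
  have htpos : (0:ℝ) < t := by exact_mod_cast ht
  have hden : (0:ℝ) < 2 * C * (t : ℝ) := by positivity
  have hy1 : (1:ℝ) ≤ y := (one_le_div hden).2 hεn
  have hy0 : (0:ℝ) ≤ y := le_trans zero_le_one hy1
  set m : ℕ := ⌈y⌉₊ with hm
  have hm0 : 0 < m := Nat.ceil_pos.2 (lt_of_lt_of_le one_pos hy1)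
  have hmy : (m:ℝ) ≤ 2 * y := by
    have h1 : (m:ℝ) < y + 1 := Nat.ceil_lt_add_one hy0
    linarith
  have hym : y ≤ (m:ℝ) := Nat.le_ceil y
  obtain ⟨φ, hφ⟩ := h (m * t) (Nat.one_le_iff_ne_zero.2 (by positivity))
  -- the class of a set `T` : for each group `j`, the offset of a vertex of group `j`
  refine ⟨m ^ t, fun T => finFunctionFinEquiv (fun j =>
    ⟨((T.filter fun w => (φ w).val / m = j.val).sup fun w => (φ w).val % m) % m,
      Nat.mod_lt _ hm0⟩), ?_, ?_⟩
  · have hyt : y ^ t ≤ ((m:ℝ)) ^ t := pow_le_pow_left₀ hy0 hym t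
    calc ⌊y ^ t⌋₊ ≤ ⌊((m:ℝ)) ^ t⌋₊ := Nat.floor_le_floor hyt
      _ = m ^ t := by rw [← Nat.cast_pow, Nat.floor_natCast]
  · intro c e heE hecard
    have hbig : C * ((m * t : ℕ) : ℝ) ≤ (e.card : ℝ) := by
      have : C * ((m * t : ℕ) : ℝ) ≤ ε * (V.card : ℝ) := by
        push_cast
        have : C * ((m:ℝ) * t) ≤ C * (2 * y * t) := by
          apply mul_le_mul_of_nonneg_left _ (by linarith)
          apply mul_le_mul_of_nonneg_right hmy (le_of_lt htpos)
        calc C * ((m:ℝ) * t) ≤ C * (2 * y * t) := this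
          _ = ε * (V.card : ℝ) := by
              rw [hy]; field_simp
      linarith
    set cv : Fin t → Fin m := finFunctionFinEquiv.symm c with hcv
    -- color indices
    have hκlt : ∀ j : Fin t, (cv j).val + j.val * m < m * t := by
      intro j
      calc (cv j).val + j.val * m < m + j.val * m := by
            exact Nat.add_lt_add_right (cv j).isLt _
        _ = (j.val + 1) * m := by ring
        _ ≤ t * m := Nat.mul_le_mul_right m j.isLt
        _ = m * t := Nat.mul_comm t m
    set κ : Fin t → Fin (m * t) := fun j => ⟨(cv j).val + j.val * m, hκlt j⟩ with hκ
    choose v hv1 hv2 using fun j => hφ e heE hbig (κ j)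
    have hdiv : ∀ j : Fin t, (φ (v j)).val / m = j.val := by
      intro j
      rw [hv2 j]
      show ((cv j).val + j.val * m) / m = j.val
      rw [Nat.add_mul_div_right _ _ hm0, Nat.div_eq_of_lt (cv j).isLt, Nat.zero_add]
    have hmod : ∀ j : Fin t, (φ (v j)).val % m = (cv j).val := by
      intro j
      rw [hv2 j]
      show ((cv j).val + j.val * m) % m = (cv j).val
      rw [Nat.add_mul_mod_self_right, Nat.mod_eq_of_lt (cv j).isLt]
    have hvinj : Function.Injective v := by
      intro i j hij
      have : (φ (v i)).val / m = (φ (v j)).val / m := by rw [hij]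
      rw [hdiv i, hdiv j] at this
      exact Fin.ext this
    refine ⟨Finset.image v Finset.univ, ?_, ?_, ?_⟩
    · intro w hw
      obtain ⟨j, _, rfl⟩ := Finset.mem_image.1 hw
      exact hv1 j
    · rw [Finset.card_image_of_injective _ hvinj, Finset.card_univ, Fintype.card_fin]
    · have hfilter : ∀ j : Fin t,
        ((Finset.image v Finset.univ).filter fun w => (φ w).val / m = j.val) = {v j} := by
        intro j
        ext w
        simp only [Finset.mem_filter, Finset.mem_image, Finset.mem_univ, true_and,
          Finset.mem_singleton]
        constructor
        · rintro ⟨⟨i, rfl⟩, hw⟩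
          rw [hdiv i] at hw
          exact congrArg v (Fin.ext hw)
        · rintro rfl
          exact ⟨⟨j, rfl⟩, hdiv j⟩
      have : (fun j : Fin t =>
          (⟨(((Finset.image v Finset.univ).filter fun w => (φ w).val / m = j.val).sup
            fun w => (φ w).val % m) % m, Nat.mod_lt _ hm0⟩ : Fin m)) = cv := by
        funext j
        apply Fin.ext
        show ((((Finset.image v Finset.univ).filter fun w => (φ w).val / m = j.val).sup
            fun w => (φ w).val % m) % m) = (cv j).val
        rw [hfilter j, Finset.sup_singleton, hmod j, Nat.mod_eq_of_lt (cv j).isLt]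
      beta_reduce
      rw [this, hcv, Equiv.apply_symm_apply]
end

section
/- Let H = (V, E) be a hypergraph, let t ≥ 2 and m be natural numbers, and suppose there exists a coloring φ : V → {red, blue} such that every hyperedge e ∈ E with |e| ≥ m contains a red vertex and a blue vertex. Then there exists a coloring ξ of the t-element subsets of V with two colors (odd and even) such that every hyperedge e ∈ E with |e| ≥ max(m, t+1) contains a t-element subset colored odd and a t-element subset colored even. In particular, f_H(t, 2) ≤ max(f_H(1, 2), t+1). -/
/-!
Colour a `t`-set by the parity of its number of blue vertices. In a hyperedge `e` with a blue
vertex `v`, a red vertex `w` and more than `t ≥ 1` vertices, pick a `t`-set `T ⊆ e` containing `w`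
but not `v`; exchanging `w` for `v` gives a `t`-set with exactly one more blue vertex, hence
of the other parity.
-/

open Finset

section Exchange

variable {α : Type*} [DecidableEq α] (p : α → Prop) [DecidablePred p]

lemma card_filter_insert_erase {T : Finset α} {v w : α} (hv : v ∉ T) (hpv : p v)
    (hpw : ¬ p w) :
    #((insert v (T.erase w)).filter p) = #(T.filter p) + 1 := by
  have hv' : v ∉ (T.filter p).erase w := fun h => hv (mem_filter.1 (mem_of_mem_erase h)).1
  rw [filter_insert, if_pos hpv, filter_erase, card_insert_of_notMem hv',
    erase_eq_of_notMem fun h => hpw (mem_filter.1 h).2]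

lemma exists_card_filter_eq_succ {s : Finset α} {t : ℕ} (ht : 0 < t) (hts : t < #s)
    {v w : α} (hv : v ∈ s) (hw : w ∈ s) (hpv : p v) (hpw : ¬ p w) :
    ∃ T ⊆ s, ∃ T' ⊆ s, #T = t ∧ #T' = t ∧ #(T'.filter p) = #(T.filter p) + 1 := by
  have hwv : {w} ⊆ s.erase v :=
    singleton_subset_iff.2 (mem_erase.2 ⟨fun h => hpw (h ▸ hpv), hw⟩)
  obtain ⟨T, hwT, hTs, hTt⟩ :=
    exists_subsuperset_card_eq hwv ht (by rw [card_erase_of_mem hv]; omega)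
  have hwT : w ∈ T := singleton_subset_iff.1 hwT
  have hvT : v ∉ T := fun h => (mem_erase.1 (hTs h)).1 rfl
  refine ⟨T, hTs.trans (erase_subset v s), insert v (T.erase w),
    insert_subset hv ((erase_subset w T).trans (hTs.trans (erase_subset v s))), hTt, ?_,
    card_filter_insert_erase p hvT hpv hpw⟩
  rw [card_insert_of_notMem fun h => hvT (mem_of_mem_erase h), card_erase_of_mem hwT]
  omega

end Exchange

/-- If the vertices of a hypergraph can be 2-colored
(red/blue) so that every hyperedge with at least `m` vertices contains both
colors, then for any `t ≥ 2` the `t`-element subsets can be 2-colored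
(odd/even) so that every hyperedge with at least `max m (t+1)` vertices
contains a `t`-element subset of each of the two colors.
(Hence `f_H(t,2) ≤ max (f_H(1,2)) (t+1)`.) -/
theorem bichromatic_tuple_coloring
    {α : Type*} (E : Set (Finset α)) (t m : ℕ) (ht : 2 ≤ t)
    (φ : α → Bool)
    (hφ : ∀ e ∈ E, m ≤ e.card →
      (∃ v ∈ e, φ v = true) ∧ (∃ v ∈ e, φ v = false)) :
    ∃ ξ : Finset α → Bool,
      ∀ e ∈ E, max m (t + 1) ≤ e.card →
        (∃ T ⊆ e, T.card = t ∧ ξ T = true) ∧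
        (∃ T ⊆ e, T.card = t ∧ ξ T = false) := by
  classical
  refine ⟨fun T => decide (Odd #(T.filter (φ ·))), fun e he he_card => ?_⟩
  rw [max_le_iff] at he_card
  obtain ⟨⟨v, hv, hφv⟩, w, hw, hφw⟩ := hφ e he he_card.1
  obtain ⟨T, hTe, T', hT'e, hT, hT', hsucc⟩ :=
    exists_card_filter_eq_succ (φ · = true) (by omega) he_card.2 hv hw hφv (by simp [hφw])
  rcases Nat.even_or_odd #(T.filter (φ ·)) with heven | hodd
  · exact ⟨⟨T', hT'e, hT', by simpa [hsucc] using heven.add_one⟩,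
      ⟨T, hTe, hT, by simpa using heven⟩⟩
  · exact ⟨⟨T, hTe, hT, by simpa using hodd⟩,
      ⟨T', hT'e, hT', by simpa [hsucc, Nat.odd_add_one] using hodd⟩⟩
end

section
/- Let P be a finite set of points in ℝ² and let D be a closed disk with |D ∩ P| = j for some integer j ≥ 1. Then there exists a closed disk D' such that D' ∩ P ⊆ D ∩ P and |D' ∩ P| = j − 1. -/
/-!
Perturb the center of `D` to a nearby point `c'` from which the points of `P` have pairwise
distinct distances: such centers exist because the bad ones lie on finitely many perpendicular
bisectors, a null set. If the perturbation is small, the points of `P` in `D` are still exactly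
those in an open ball around `c'`, and dropping the one farthest from `c'` leaves the points of
`P` in a smaller open ball around `c'`, which a closed ball of slightly smaller radius cuts out.
-/

open Set Metric MeasureTheory Topology

section PseudoMetric

variable {α : Type*} [PseudoMetricSpace α] {P : Set α}

lemma exists_pos_inter_ball_add_eq_inter_closedBall (hP : P.Finite) (c : α) (r : ℝ) :
    ∃ δ > 0, P ∩ ball c (r + δ) = P ∩ closedBall c r := by
  have hfar : ∀ᶠ δ in 𝓝[>] (0 : ℝ), ∀ p ∈ P \ closedBall c r, r + δ < dist p c := by
    refine hP.sdiff.eventually_all.2 fun p hp => ?_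
    have : 0 < dist p c - r := by simpa [sub_pos] using hp.2
    filter_upwards [nhdsWithin_le_nhds (eventually_lt_nhds this)] with δ hδ
    linarith
  obtain ⟨δ, hδ, hδpos⟩ := (hfar.and self_mem_nhdsWithin).exists
  refine ⟨δ, hδpos, Subset.antisymm (fun p ⟨hpP, hp⟩ => ⟨hpP, ?_⟩)
    (inter_subset_inter_right _ (closedBall_subset_ball (by linarith)))⟩
  by_contra hpr
  exact (hδ p ⟨hpP, hpr⟩).not_gt (mem_ball.1 hp)

lemma exists_nonneg_inter_closedBall_eq_inter_ball (hP : P.Finite) (c : α) {d : ℝ} (hd : 0 < d) :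
    ∃ r, 0 ≤ r ∧ P ∩ closedBall c r = P ∩ ball c d := by
  have hnear : ∀ᶠ r in 𝓝[<] d, ∀ p ∈ P ∩ ball c d, dist p c ≤ r :=
    (hP.inter_of_left _).eventually_all.2 fun p hp =>
      nhdsWithin_le_nhds (eventually_ge_nhds (mem_ball.1 hp.2))
  obtain ⟨r, ⟨hr, hr0⟩, hrd⟩ :=
    ((hnear.and (nhdsWithin_le_nhds (eventually_gt_nhds hd))).and self_mem_nhdsWithin).exists
  exact ⟨r, hr0.le, Subset.antisymm
    (inter_subset_inter_right _ (closedBall_subset_ball hrd)) fun p hp => ⟨hp.1, hr p hp⟩⟩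

lemma inter_ball_dist_eq_sdiff_singleton {c x : α} {R : ℝ} (hinj : InjOn (dist c) P)
    (hx : x ∈ P ∩ ball c R) (hmax : ∀ y ∈ P ∩ ball c R, dist c y ≤ dist c x) :
    P ∩ ball c (dist c x) = (P ∩ ball c R) \ {x} := by
  ext y
  constructor
  · rintro ⟨hyP, hy⟩
    rw [mem_ball'] at hy
    exact ⟨⟨hyP, mem_ball'.2 (hy.trans (mem_ball'.1 hx.2))⟩, by rintro rfl; exact hy.false⟩
  · rintro ⟨hy, hyx⟩
    exact ⟨hy.1, mem_ball'.2 ((hmax y hy).lt_of_ne fun h => hyx (hinj hy.1 hx.1 h))⟩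

end PseudoMetric

section InnerProductSpace

variable {E : Type*} [NormedAddCommGroup E] [InnerProductSpace ℝ E] [FiniteDimensional ℝ E]

lemma measure_setOf_not_injOn_dist [MeasurableSpace E] [BorelSpace E] {P : Set E}
    (hP : P.Countable) (μ : Measure E) [μ.IsAddHaarMeasure] :
    μ {x | ¬ InjOn (dist x) P} = 0 := by
  have hsub : {x | ¬ InjOn (dist x) P} ⊆
      ⋃ p ∈ P, ⋃ q ∈ P, {x | p ≠ q ∧ x ∈ AffineSubspace.perpBisector p q} := by
    intro x hx
    simp only [InjOn, not_forall] at hx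
    obtain ⟨p, hp, q, hq, hpq, hne⟩ := hx
    exact mem_biUnion hp (mem_biUnion hq
      ⟨hne, AffineSubspace.mem_perpBisector_iff_dist_eq.2 (by simpa [dist_comm] using hpq)⟩)
  refine measure_mono_null hsub ((measure_biUnion_null_iff hP).2 fun p _ =>
    (measure_biUnion_null_iff hP).2 fun q _ => ?_)
  by_cases hpq : p = q
  · simp [hpq]
  · exact measure_mono_null (fun x hx => hx.2)
      (Measure.addHaar_affineSubspace μ _ (AffineSubspace.perpBisector_eq_top.not.2 hpq))

lemma exists_mem_ball_notMem_injOn_dist [Nontrivial E] {P : Set E} (hP : P.Countable) (c : E)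
    {ε : ℝ} (hε : 0 < ε) : ∃ c' ∈ ball c ε, c' ∉ P ∧ InjOn (dist c') P := by
  let : MeasurableSpace E := borel E
  have : BorelSpace E := ⟨rfl⟩
  let μ : Measure E := Measure.addHaar
  have hbad : μ (P ∪ {x | ¬ InjOn (dist x) P}) = 0 :=
    measure_union_null (hP.measure_zero μ) (measure_setOf_not_injOn_dist hP μ)
  have hgood : μ (ball c ε \ (P ∪ {x | ¬ InjOn (dist x) P})) ≠ 0 := by
    rw [measure_sdiff_null hbad]
    exact (measure_ball_pos μ c hε).ne'
  obtain ⟨c', hc', hc'good⟩ := nonempty_of_measure_ne_zero hgood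
  simp only [mem_union, mem_ofPred_eq, not_or, not_not] at hc'good
  exact ⟨c', hc', hc'good⟩

end InnerProductSpace

theorem disk_shrinking_one_general
    (P : Set (EuclideanSpace ℝ (Fin 2))) (hP : P.Finite)
    (c : EuclideanSpace ℝ (Fin 2)) (r : ℝ)
    (j : ℕ) (hj : 1 ≤ j)
    (hcard : (P ∩ Metric.closedBall c r).ncard = j) :
    ∃ (c' : EuclideanSpace ℝ (Fin 2)) (r' : ℝ), 0 ≤ r' ∧
      P ∩ Metric.closedBall c' r' ⊆ P ∩ Metric.closedBall c r ∧
      (P ∩ Metric.closedBall c' r').ncard = j - 1 := by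
  obtain ⟨δ, hδ, hPδ⟩ := exists_pos_inter_ball_add_eq_inter_closedBall hP c r
  obtain ⟨c', hc', hc'P, hinj⟩ :=
    exists_mem_ball_notMem_injOn_dist hP.countable c (half_pos hδ)
  have hcc' : dist c c' < δ / 2 := mem_ball'.1 hc'
  have hS : P ∩ ball c' (r + δ / 2) = P ∩ closedBall c r := by
    refine Subset.antisymm ?_ (inter_subset_inter_right _ (closedBall_subset_ball' ?_))
    · rw [← hPδ]
      exact inter_subset_inter_right _ (ball_subset_ball' (by rw [dist_comm]; linarith))
    · linarith
  have hSne : (P ∩ ball c' (r + δ / 2)).Nonempty := by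
    rw [hS, ← ncard_pos (hP.inter_of_left _), hcard]
    exact hj
  obtain ⟨x, hx, hxmax⟩ := exists_max_image _ (dist c') (hP.inter_of_left _) hSne
  have hc'x : 0 < dist c' x := dist_pos.2 (ne_of_mem_of_not_mem hx.1 hc'P).symm
  obtain ⟨r', hr', hr'x⟩ := exists_nonneg_inter_closedBall_eq_inter_ball hP c' hc'x
  refine ⟨c', r', hr', ?_, ?_⟩ <;>
    rw [hr'x, inter_ball_dist_eq_sdiff_singleton hinj hx hxmax, hS]
  · exact sdiff_subset
  · rw [ncard_sdiff_singleton_of_mem (hS ▸ hx), hcard]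

/-- Shrinking lemma for disks: if a closed disk `D` contains
exactly `j ≥ 1` points of a finite planar point set `P`, then there is a closed
disk `D'` with `D' ∩ P ⊆ D ∩ P` and `|D' ∩ P| = j - 1`. -/
theorem disk_shrinking_one
    (P : Set (EuclideanSpace ℝ (Fin 2))) (hP : P.Finite)
    (c : EuclideanSpace ℝ (Fin 2)) (r : ℝ) (hr : 0 ≤ r)
    (j : ℕ) (hj : 1 ≤ j)
    (hcard : (P ∩ Metric.closedBall c r).ncard = j) :
    ∃ (c' : EuclideanSpace ℝ (Fin 2)) (r' : ℝ), 0 ≤ r' ∧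
      P ∩ Metric.closedBall c' r' ⊆ P ∩ Metric.closedBall c r ∧
      (P ∩ Metric.closedBall c' r').ncard = j - 1 :=
  disk_shrinking_one_general P hP c r j hj hcard
end

section
/- Let P be a finite set of points in ℝ² and let D be a closed disk with |D ∩ P| = j. Then for every integer i with 0 ≤ i ≤ j there exists a closed disk D' such that D' ∩ P ⊆ D ∩ P and |D' ∩ P| = i. -/
/-!
Remove the points of `S = P ∩ D` one at a time. Let `p` be a point of `S` farthest from the
centre `c` of `D`. Moving the centre a little directly away from `p` makes `p`, by strict
convexity of the norm, strictly farther from the new centre than every other point of `S`, so a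
slightly smaller radius drops `p` and keeps `S \ {p}`; if the move is shorter than the gap
between `D` and the points of `P` outside it, no new point enters. The count `0` is realised by
a disk of radius `0` centred off `P`.
-/

open Metric Filter Set Topology

section PseudoMetric

variable {X : Type*} [PseudoMetricSpace X]

theorem Set.Finite.exists_pos_inter_ball_subset_closedBall {P : Set X} (hP : P.Finite)
    (c : X) (r : ℝ) : ∃ ε > 0, P ∩ ball c (r + ε) ⊆ closedBall c r := by
  have h : ∀ᶠ ε in 𝓝[>] (0 : ℝ), ∀ x ∈ P, dist x c < r + ε → dist x c ≤ r := by
    refine hP.eventually_all.2 fun x _ => ?_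
    rcases le_or_gt (dist x c) r with hx | hx
    · exact Eventually.of_forall fun _ _ => hx
    · filter_upwards [Ioo_mem_nhdsGT (sub_pos.2 hx)] with ε hε hlt
      linarith [hε.2]
  obtain ⟨ε, hε, hε0⟩ := (h.and self_mem_nhdsWithin).exists
  exact ⟨ε, hε0, fun x hx => hε x hx.1 hx.2⟩

theorem Set.Finite.eventually_subset_closedBall {S : Set X} (hS : S.Finite) {c : X} {r : ℝ}
    (h : S ⊆ ball c r) : ∀ᶠ r' in 𝓝[<] r, S ⊆ closedBall c r' :=
  hS.eventually_all.2 fun _ hx =>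
    Filter.mem_of_superset (Ioo_mem_nhdsLT (mem_ball.1 (h hx))) fun _ hr' => hr'.1.le

end PseudoMetric

section NormedSpace

variable {E : Type*} [NormedAddCommGroup E] [NormedSpace ℝ E]

theorem dist_add_smul_sub_self (c p : E) {t : ℝ} (ht : 0 ≤ t) :
    dist p (c + t • (c - p)) = (1 + t) * dist p c := by
  rw [dist_eq_norm, dist_eq_norm, ← norm_smul_of_nonneg (by linarith)]
  congr 1
  module

variable [StrictConvexSpace ℝ E]

theorem norm_add_smul_lt_of_norm_le_of_ne {x y : E} {t : ℝ} (ht : 0 < t) (hxy : ‖x‖ ≤ ‖y‖)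
    (hne : x ≠ y) : ‖x + t • y‖ < (1 + t) * ‖y‖ := by
  by_cases hray : SameRay ℝ x (t • y)
  · have hray' : SameRay ℝ x y := by
      simpa [inv_smul_smul₀ ht.ne'] using hray.pos_smul_right (inv_pos.2 ht)
    have hlt : ‖x‖ < ‖y‖ := hxy.lt_of_ne fun h => hne (hray'.eq_of_norm_eq h)
    rw [hray.norm_add, norm_smul_of_nonneg ht.le]
    linarith
  · calc ‖x + t • y‖ < ‖x‖ + ‖t • y‖ := norm_add_lt_of_not_sameRay hray
      _ ≤ (1 + t) * ‖y‖ := by rw [norm_smul_of_nonneg ht.le]; linarith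

theorem dist_add_smul_sub_lt {c p q : E} {t : ℝ} (ht : 0 < t) (hq : dist q c ≤ dist p c)
    (hqp : q ≠ p) : dist q (c + t • (c - p)) < (1 + t) * dist p c := by
  rw [dist_eq_norm, dist_eq_norm] at *
  have : q - (c + t • (c - p)) = (q - c) + t • (p - c) := by module
  rw [this]
  exact norm_add_smul_lt_of_norm_le_of_ne ht hq (by simpa [sub_left_inj] using hqp)

theorem exists_closedBall_inter_eq_sdiff_singleton {P : Set E} (hP : P.Finite) {c : E} {r : ℝ}
    (h : 1 < (P ∩ closedBall c r).ncard) :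
    ∃ p ∈ P ∩ closedBall c r, ∃ (c' : E) (r' : ℝ), 0 ≤ r' ∧
      P ∩ closedBall c' r' = (P ∩ closedBall c r) \ {p} := by
  set S := P ∩ closedBall c r
  have hS : S.Finite := hP.inter_of_left _
  obtain ⟨a, ha, b, hb, hab⟩ := (one_lt_ncard hS).1 h
  obtain ⟨p, hp, hfar⟩ := S.exists_max_image (dist · c) hS ⟨a, ha⟩
  set R := dist p c
  have hR : 0 < R := by
    by_contra! hR
    exact hab <| (dist_le_zero.1 ((hfar a ha).trans hR)).trans
      (dist_le_zero.1 ((hfar b hb).trans hR)).symm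
  obtain ⟨ε, hε, hgap⟩ := hP.exists_pos_inter_ball_subset_closedBall c r
  set t := ε / (2 * R)
  have ht : 0 < t := by positivity
  have htR : t * R = ε / 2 := by simp only [t]; field_simp
  set c' := c + t • (c - p)
  have hnear : S \ {p} ⊆ ball c' ((1 + t) * R) := fun q hq =>
    dist_add_smul_sub_lt ht (hfar q hq.1) hq.2
  obtain ⟨ρ, hρS, hρ⟩ := ((hS.sdiff.eventually_subset_closedBall hnear).and
    (Ioo_mem_nhdsLT (by positivity : (0 : ℝ) < (1 + t) * R))).exists
  refine ⟨p, hp, c', ρ, hρ.1.le, Subset.antisymm ?_ (subset_inter (sdiff_subset.trans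
    inter_subset_left) hρS)⟩
  rintro x ⟨hxP, hx⟩
  have hc'c : dist c' c = t * R := by
    rw [dist_self_add_left, norm_smul_of_nonneg ht.le, norm_sub_rev, ← dist_eq_norm]
  have hxc : dist x c < r + ε := calc
    dist x c ≤ dist x c' + dist c' c := dist_triangle _ _ _
    _ < (1 + t) * R + t * R := by rw [hc'c]; linarith [mem_closedBall.1 hx, hρ.2]
    _ ≤ r + ε := by linarith [mem_closedBall.1 hp.2]
  refine ⟨⟨hxP, hgap ⟨hxP, hxc⟩⟩, fun hxp => ?_⟩
  rw [mem_singleton_iff.1 hxp, mem_closedBall, dist_add_smul_sub_self c p ht.le] at hx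
  linarith [hρ.2]

theorem exists_closedBall_inter_ncard_eq [Nontrivial E] {P : Set E} (hP : P.Finite) {c : E}
    {r : ℝ} {j : ℕ} (hj : (P ∩ closedBall c r).ncard = j) {i : ℕ} (hi : i ≤ j) :
    ∃ (c' : E) (r' : ℝ), 0 ≤ r' ∧ P ∩ closedBall c' r' ⊆ P ∩ closedBall c r ∧
      (P ∩ closedBall c' r').ncard = i := by
  rcases i.eq_zero_or_pos with rfl | hi0
  · have : Infinite E := Module.Free.infinite ℝ E
    obtain ⟨c', hc'⟩ := hP.exists_notMem
    have hempty : P ∩ closedBall c' 0 = ∅ := by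
      rw [closedBall_zero, inter_singleton_eq_empty.2 hc']
    exact ⟨c', 0, le_rfl, hempty ▸ empty_subset _, hempty ▸ ncard_empty E⟩
  induction j generalizing c r with
  | zero => omega
  | succ n ih =>
    rcases hi.eq_or_lt with rfl | hlt
    · have hne : (P ∩ closedBall c r).Nonempty := nonempty_of_ncard_ne_zero (by omega)
      exact ⟨c, r, nonempty_closedBall.1 (hne.mono inter_subset_right), subset_rfl, hj⟩
    have htwo : 1 < (P ∩ closedBall c r).ncard := by omega
    obtain ⟨p, hp, c₁, r₁, hr₁, heq⟩ := exists_closedBall_inter_eq_sdiff_singleton hP htwo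
    have hn : (P ∩ closedBall c₁ r₁).ncard = n := by
      rw [heq, ncard_sdiff_singleton_of_mem hp, hj, Nat.add_sub_cancel]
    obtain ⟨c₂, r₂, hr₂, hsub, hcard⟩ := ih hn (by omega)
    exact ⟨c₂, r₂, hr₂, hsub.trans (heq ▸ sdiff_subset), hcard⟩

end NormedSpace

theorem disk_shrinking_general
    (P : Set (EuclideanSpace ℝ (Fin 2))) (hP : P.Finite)
    (c : EuclideanSpace ℝ (Fin 2)) (r : ℝ)
    (j : ℕ) (hcard : (P ∩ Metric.closedBall c r).ncard = j) :
    ∀ i : ℕ, i ≤ j →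
      ∃ (c' : EuclideanSpace ℝ (Fin 2)) (r' : ℝ), 0 ≤ r' ∧
        P ∩ Metric.closedBall c' r' ⊆ P ∩ Metric.closedBall c r ∧
        (P ∩ Metric.closedBall c' r').ncard = i :=
  fun _ hi => exists_closedBall_inter_ncard_eq hP hcard hi

/-- Shrinking lemma for disks: if a closed disk `D` contains
exactly `j` points of a finite planar point set `P`, then for every `0 ≤ i ≤ j`
there is a closed disk `D'` with `D' ∩ P ⊆ D ∩ P` and `|D' ∩ P| = i`. -/
theorem disk_shrinking
    (P : Set (EuclideanSpace ℝ (Fin 2))) (hP : P.Finite)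
    (c : EuclideanSpace ℝ (Fin 2)) (r : ℝ) (hr : 0 ≤ r)
    (j : ℕ) (hcard : (P ∩ Metric.closedBall c r).ncard = j) :
    ∀ i : ℕ, i ≤ j →
      ∃ (c' : EuclideanSpace ℝ (Fin 2)) (r' : ℝ), 0 ≤ r' ∧
        P ∩ Metric.closedBall c' r' ⊆ P ∩ Metric.closedBall c r ∧
        (P ∩ Metric.closedBall c' r').ncard = i :=
  disk_shrinking_general P hP c r j hcard
end

section
/- Let D be a closed disk in ℝ² and let x and y be two distinct points lying in the interior of D. Then there exist a center c' ∈ ℝ² and a radius r' ≥ 0 such that the closed disk {z ∈ ℝ² : ‖z − c'‖ ≤ r'} is contained in the interior of D and both x and y lie on its boundary circle {z ∈ ℝ² : ‖z − c'‖ = r'}. -/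
open Metric RealInnerProductSpace

lemma aux_circle {E : Type*} [NormedAddCommGroup E] [InnerProductSpace ℝ E]
    (c : E) (r : ℝ) (x y : E)
    (hx : dist x c < r) (hy : dist y c < r) (hne : x ≠ y)
    (hs : ⟪y - x, c - (2:ℝ)⁻¹ • (x + y)⟫ ≤ 0) :
    ∃ (c' : E) (r' : ℝ), 0 ≤ r' ∧
      (∀ z ∈ closedBall c' r', dist z c < r) ∧
      dist x c' = r' ∧ dist y c' = r' := by
  set m : E := (2:ℝ)⁻¹ • (x + y) with hm
  have hym : y - m = (2 : ℝ)⁻¹ • (y - x) := by rw [hm]; module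
  have hnorm : (0:ℝ) < ‖y - x‖ ^ 2 := by
    have h : y - x ≠ 0 := sub_ne_zero.mpr (Ne.symm hne)
    exact pow_pos (norm_pos_iff.mpr h) 2
  have hd : ⟪y - x, y - c⟫ = (2:ℝ)⁻¹ * ‖y - x‖ ^ 2 + ⟪y - x, m - c⟫ := by
    have h : y - c = (y - m) + (m - c) := by abel
    rw [h, inner_add_right, hym, real_inner_smul_right, real_inner_self_eq_norm_sq]
  have hnum : 0 ≤ ⟪y - x, m - c⟫ := by
    have h : m - c = -(c - m) := by abel
    rw [h, inner_neg_right]; linarith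
  have hden : 0 < ⟪y - x, y - c⟫ := by
    rw [hd]; nlinarith
  set t : ℝ := ⟪y - x, m - c⟫ / ⟪y - x, y - c⟫ with ht
  have ht0 : 0 ≤ t := div_nonneg hnum hden.le
  have ht1 : t ≤ 1 := by
    rw [ht, div_le_one hden, hd]; nlinarith
  set p : E := c + t • (y - c) with hp
  have hpc : dist p c = t * ‖y - c‖ := by
    rw [dist_eq_norm, hp]
    simp [norm_smul, abs_of_nonneg ht0]
  have hpy : dist y p = (1 - t) * ‖y - c‖ := by
    have h : y - p = (1 - t) • (y - c) := by rw [hp]; module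
    rw [dist_eq_norm, h, norm_smul, Real.norm_eq_abs,
      abs_of_nonneg (by linarith : (0:ℝ) ≤ 1 - t)]
  -- p lies on the perpendicular bisector of x and y
  have hperp : ⟪y - x, p - m⟫ = 0 := by
    have hp' : p - m = (c - m) + t • (y - c) := by rw [hp]; abel
    rw [hp', inner_add_right, real_inner_smul_right, ht,
      div_mul_cancel₀ _ hden.ne']
    have h : c - m = -(m - c) := by abel
    rw [h, inner_neg_right]; ring
  have heq : dist x p = dist y p := by
    have hin : ⟪(p - x) + (p - y), (p - x) - (p - y)⟫ = 0 := by
      have h1 : (p - x) - (p - y) = y - x := by abel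
      have h2 : (p - x) + (p - y) = (2:ℝ) • (p - m) := by rw [hm]; module
      rw [h1, h2, real_inner_smul_left, real_inner_comm, hperp, mul_zero]
    have := (real_inner_add_sub_eq_zero_iff (p - x) (p - y)).mp hin
    rw [dist_eq_norm, dist_eq_norm, ← norm_neg (x - p), ← norm_neg (y - p)]
    simpa using this
  refine ⟨p, dist y p, dist_nonneg, ?_, heq, rfl⟩
  intro z hz
  have hzp : dist z p ≤ dist y p := hz
  calc dist z c ≤ dist z p + dist p c := dist_triangle _ _ _
    _ ≤ dist y p + dist p c := by linarith
    _ = ‖y - c‖ := by rw [hpy, hpc]; ring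
    _ = dist y c := (dist_eq_norm _ _).symm
    _ < r := hy

/-- For any closed disk `D` in `ℝ²` and any two distinct
points `x, y` in the interior of `D`, there is a closed disk contained in the
interior of `D` whose boundary circle passes through both `x` and `y`. -/
theorem disk_through_two_points_inside
    (c : EuclideanSpace ℝ (Fin 2)) (r : ℝ) (hr : 0 ≤ r)
    (x y : EuclideanSpace ℝ (Fin 2)) (hxy : x ≠ y)
    (hx : x ∈ interior (Metric.closedBall c r))
    (hy : y ∈ interior (Metric.closedBall c r)) :
    ∃ (c' : EuclideanSpace ℝ (Fin 2)) (r' : ℝ), 0 ≤ r' ∧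
      Metric.closedBall c' r' ⊆ interior (Metric.closedBall c r) ∧
      x ∈ Metric.sphere c' r' ∧ y ∈ Metric.sphere c' r' := by
  have hr0 : r ≠ 0 := by
    rintro rfl
    rw [Metric.closedBall_zero] at hx hy
    have hxc : x = c := by have := interior_subset hx; simpa using this
    have hyc : y = c := by have := interior_subset hy; simpa using this
    exact hxy (hxc.trans hyc.symm)
  have hint : interior (Metric.closedBall c r) = Metric.ball c r :=
    interior_closedBall c hr0
  rw [hint] at hx hy ⊢
  have hx' : dist x c < r := mem_ball.mp hx
  have hy' : dist y c < r := mem_ball.mp hy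
  rcases le_total (⟪y - x, c - (2:ℝ)⁻¹ • (x + y)⟫) 0 with hs | hs
  · obtain ⟨c', r', h0, hsub, hx2, hy2⟩ := aux_circle c r x y hx' hy' hxy hs
    exact ⟨c', r', h0, fun z hz => Metric.mem_ball.mpr (hsub z hz), hx2, hy2⟩
  · have hs' : ⟪x - y, c - (2:ℝ)⁻¹ • (y + x)⟫ ≤ 0 := by
      have h1 : x - y = -(y - x) := by abel
      have h2 : (2:ℝ)⁻¹ • (y + x) = (2:ℝ)⁻¹ • (x + y) := by rw [add_comm]
      rw [h1, h2, inner_neg_left]; linarith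
    obtain ⟨c', r', h0, hsub, hy2, hx2⟩ := aux_circle c r y x hy' hx' hxy.symm hs'
    exact ⟨c', r', h0, fun z hz => Metric.mem_ball.mpr (hsub z hz), hx2, hy2⟩
end
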